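/- arXiv:1401.6808 — 8 statements merged into one kernel-verified Lean document; each statement's English description precedes it below -/
import Mathlib

section
/- Let B be a complete Boolean algebra, A ⊆ B a complete subalgebra, P a set of nonzero elements of B, and Q a set of nonzero elements of A with Q ⊆ P such that Q is dense in A (for every nonzero a ∈ A there is q ∈ Q with q ≤ a). Let π̄ : P → Q be a strong projection such that p ≤ π̄(p) for all p ∈ P, where strong projection means: π̄ is monotone, π̄ is surjective onto Q, and for all p ∈ P and q ∈ Q with q ≤ π̄(p) there exists p′ ∈ P with p′ ≤ p and π̄(p′) = q such that every r ∈ P with r ≤ p and π̄(r) ≤ q satisfies r ≤ p′. Then π̄ coincides with the canonical projection: π̄(p) = π_A(p) for every p ∈ P. (Second claim of the paper's Lemma 2.2.) -/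
/-
STATEMENT 2: A strong projection π̄ : P → Q (with p ≤ π̄(p)) coincides with
the canonical projection onto the complete subalgebra A on P.
-/

namespace Stmt2

variable {B : Type*} [CompleteBooleanAlgebra B]

/-- `A` is a complete subalgebra of the complete Boolean algebra `B`. -/
def IsCompleteSubalgebra (A : Set B) : Prop :=
  ⊤ ∈ A ∧ (∀ a ∈ A, aᶜ ∈ A) ∧ ∀ S ⊆ A, sSup S ∈ A

/-- The canonical projection onto `A`. -/
def proj (A : Set B) (b : B) : B := sInf {a | a ∈ A ∧ b ≤ a}

theorem strong_projection_eq_canonical (A P Q : Set B) (hA : IsCompleteSubalgebra A)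
    (hPne : ∀ p ∈ P, p ≠ ⊥)
    (hQA : Q ⊆ A) (hQP : Q ⊆ P)
    (hQdense : ∀ a ∈ A, a ≠ ⊥ → ∃ q ∈ Q, q ≤ a)
    (πbar : B → B)
    (hπQ : ∀ p ∈ P, πbar p ∈ Q)
    (hπle : ∀ p ∈ P, p ≤ πbar p)
    (hπmono : ∀ p ∈ P, ∀ p' ∈ P, p ≤ p' → πbar p ≤ πbar p')
    (hπsurj : ∀ q ∈ Q, ∃ p ∈ P, πbar p = q)
    (hπstrong : ∀ p ∈ P, ∀ q ∈ Q, q ≤ πbar p →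
      ∃ p' ∈ P, p' ≤ p ∧ πbar p' = q ∧ ∀ r ∈ P, r ≤ p → πbar r ≤ q → r ≤ p') :
    ∀ p ∈ P, πbar p = proj A p := by
  obtain ⟨htop, hcompl, hsup⟩ := hA
  have hinf : ∀ x ∈ A, ∀ y ∈ A, x ⊓ y ∈ A := by
    intro x hx y hy
    have : sSup {xᶜ, yᶜ} ∈ A := by
      apply hsup
      intro z hz
      rcases hz with h | h <;> subst h
      · exact hcompl x hx
      · exact hcompl y hy
    have h2 := hcompl _ this
    rwa [sSup_pair, compl_sup, compl_compl, compl_compl] at h2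
  intro p hp
  apply le_antisymm
  · -- πbar p ≤ proj A p
    apply le_sInf
    rintro a ⟨haA, hpa⟩
    by_contra hcon
    have hne : πbar p ⊓ aᶜ ≠ ⊥ := by
      intro h
      refine hcon ?_
      calc πbar p = πbar p ⊓ (a ⊔ aᶜ) := by simp
        _ = (πbar p ⊓ a) ⊔ (πbar p ⊓ aᶜ) := inf_sup_left _ _ _
        _ ≤ a := by simp [h]
    have hmem : πbar p ⊓ aᶜ ∈ A := hinf _ (hQA (hπQ p hp)) _ (hcompl a haA)
    obtain ⟨q, hqQ, hqle⟩ := hQdense _ hmem hne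
    obtain ⟨p', hp'P, hp'p, hπp', _⟩ :=
      hπstrong p hp q hqQ (hqle.trans inf_le_left)
    have h1 : p' ≤ a := hp'p.trans hpa
    have h2 : p' ≤ aᶜ := (hπle p' hp'P).trans (hπp' ▸ hqle.trans inf_le_right)
    exact hPne p' hp'P (le_bot_iff.mp ((le_inf h1 h2).trans_eq (inf_compl_eq_bot)))
  · exact sInf_le ⟨hQA (hπQ p hp), hπle p hp⟩

end Stmt2
end

section
/- For every sequence p̄ : ℤ → P̂ satisfying the linking equations f(π₀(m(p̄(k)))) = π₁(m(p̄(k+1))) for all k ∈ ℤ, one has π(m(p̄(i))) = π(m(p̄(j))) = π(p̄(0)^P) for all i, j ∈ ℤ. (Equation (4.6) of the paper: the Q-projection is constant along conditions of the amalgamation.) -/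
namespace Stmt6

variable {B : Type*} [CompleteBooleanAlgebra B]

/-- `A` is a complete subalgebra of the complete Boolean algebra `B`. -/
def IsCompleteSubalgebra (A : Set B) : Prop :=
  ⊤ ∈ A ∧ (∀ a ∈ A, aᶜ ∈ A) ∧ ∀ S ⊆ A, sSup S ∈ A

/-- The canonical projection onto `A`. -/
def proj (A : Set B) (b : B) : B := sInf {a | a ∈ A ∧ b ≤ a}

/-- The meet `m(p̂) = p ⊓ b₀ ⊓ b₁` of the components of a triple. -/
def bm (t : B × B × B) : B := t.1 ⊓ t.2.1 ⊓ t.2.2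

/-- Membership in the blowup `P̂`. -/
def InBlowup (Q B0 B1 P : Set B) (t : B × B × B) : Prop :=
  t.1 ∈ P ∧ t.2.1 ∈ B0 ∧ t.2.2 ∈ B1 ∧ proj Q (bm t) = proj Q t.1

/-!
Since `Q ⊆ B₀ ∩ B₁`, projecting to `Q` factors through `π₀` and through `π₁`, and `f` commutes
with `π`. Hence the linking equation gives
`π(m(p̄ k)) = π(π₀(m(p̄ k))) = π(f(π₀(m(p̄ k)))) = π(π₁(m(p̄ (k+1)))) = π(m(p̄ (k+1)))`,
so `k ↦ π(m(p̄ k))` is `1`-periodic on `ℤ`, i.e. constant; the blowup condition at `0` identifies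
the constant value with `π(p̄(0)^P)`.
-/

lemma le_proj (A : Set B) (b : B) : b ≤ proj A b :=
  le_sInf fun _ ha => ha.2

lemma proj_le {A : Set B} {a b : B} (ha : a ∈ A) (hba : b ≤ a) : proj A b ≤ a :=
  sInf_le ⟨ha, hba⟩

lemma proj_mem {A : Set B} (hA : IsCompleteSubalgebra A) (b : B) : proj A b ∈ A := by
  obtain ⟨-, hcompl, hsSup⟩ := hA
  rw [← compl_compl (proj A b), proj, compl_sInf']
  exact hcompl _ (hsSup _ (Set.image_subset_iff.2 fun a ha => hcompl a ha.1))

lemma proj_proj_of_subset {Q A : Set B} (hQA : Q ⊆ A) (b : B) :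
    proj Q (proj A b) = proj Q b := by
  unfold proj
  congr 1
  ext q
  exact ⟨fun ⟨hq, hle⟩ => ⟨hq, (le_proj A b).trans hle⟩,
    fun ⟨hq, hle⟩ => ⟨hq, proj_le (hQA hq) hle⟩⟩

lemma proj_eq_of_map_proj_eq_proj {Q B0 B1 : Set B} (hB0 : IsCompleteSubalgebra B0)
    (hQB0 : Q ⊆ B0) (hQB1 : Q ⊆ B1) {f : B → B}
    (hf_proj : ∀ b ∈ B0, proj Q (f b) = proj Q b) {x y : B}
    (hxy : f (proj B0 x) = proj B1 y) : proj Q x = proj Q y :=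
  calc proj Q x = proj Q (proj B0 x) := (proj_proj_of_subset hQB0 x).symm
    _ = proj Q (f (proj B0 x)) := (hf_proj _ (proj_mem hB0 x)).symm
    _ = proj Q (proj B1 y) := by rw [hxy]
    _ = proj Q y := proj_proj_of_subset hQB1 y

theorem amalgamation_proj_constant_general (Q B0 B1 P : Set B)
    (hB0 : IsCompleteSubalgebra B0)
    (hQB0 : Q ⊆ B0) (hQB1 : Q ⊆ B1)
    -- f : B₀ → B₁ is an isomorphism of Boolean algebras fixing Q pointwise
    -- and commuting with the projection to Q; finv is its inverse.
    (f : B → B)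
    (hf_proj : ∀ b ∈ B0, proj Q (f b) = proj Q b)
    (pb : ℤ → B × B × B)
    (hpb : ∀ k : ℤ, InBlowup Q B0 B1 P (pb k))
    (hlink : ∀ k : ℤ, f (proj B0 (bm (pb k))) = proj B1 (bm (pb (k + 1)))) :
    ∀ i j : ℤ, proj Q (bm (pb i)) = proj Q (bm (pb j)) ∧
      proj Q (bm (pb i)) = proj Q (pb 0).1 := by
  have hperiodic : Function.Periodic (fun k => proj Q (bm (pb k))) 1 := fun k =>
    (proj_eq_of_map_proj_eq_proj hB0 hQB0 hQB1 hf_proj (hlink k)).symm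
  have hconst (k : ℤ) : proj Q (bm (pb k)) = proj Q (bm (pb 0)) := by
    simpa using hperiodic.int_mul_eq k
  exact fun i j => ⟨(hconst i).trans (hconst j).symm, (hconst i).trans (hpb 0).2.2.2⟩

theorem amalgamation_proj_constant (Q B0 B1 P : Set B)
    (hQ : IsCompleteSubalgebra Q) (hB0 : IsCompleteSubalgebra B0)
    (hB1 : IsCompleteSubalgebra B1)
    (hQB0 : Q ⊆ B0) (hQB1 : Q ⊆ B1)
    (hPne : ∀ p ∈ P, p ≠ ⊥)
    -- f : B₀ → B₁ is an isomorphism of Boolean algebras fixing Q pointwise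
    -- and commuting with the projection to Q; finv is its inverse.
    (f finv : B → B)
    (hf_mem : ∀ b ∈ B0, f b ∈ B1) (hfinv_mem : ∀ b ∈ B1, finv b ∈ B0)
    (hfinv_f : ∀ b ∈ B0, finv (f b) = b) (hf_finv : ∀ b ∈ B1, f (finv b) = b)
    (hf_inf : ∀ a ∈ B0, ∀ b ∈ B0, f (a ⊓ b) = f a ⊓ f b)
    (hf_sup : ∀ a ∈ B0, ∀ b ∈ B0, f (a ⊔ b) = f a ⊔ f b)
    (hf_compl : ∀ a ∈ B0, f aᶜ = (f a)ᶜ)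
    (hf_fixQ : ∀ q ∈ Q, f q = q)
    (hf_proj : ∀ b ∈ B0, proj Q (f b) = proj Q b)
    (pb : ℤ → B × B × B)
    (hpb : ∀ k : ℤ, InBlowup Q B0 B1 P (pb k))
    (hlink : ∀ k : ℤ, f (proj B0 (bm (pb k))) = proj B1 (bm (pb (k + 1)))) :
    ∀ i j : ℤ, proj Q (bm (pb i)) = proj Q (bm (pb j)) ∧
      proj Q (bm (pb i)) = proj Q (pb 0).1 :=
  amalgamation_proj_constant_general Q B0 B1 P hB0 hQB0 hQB1 f hf_proj pb hpb hlink

end Stmt6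
end

section
/- (The paper's Lemma 4.2: the zeroth-coordinate map is a strong projection from the amalgamation onto the blowup.) Assume additionally that q ⊓ p ∈ P whenever p ∈ P, q ∈ Q and ⊥ ≠ q ≤ π(p), and that R(q ⊓ p, q) whenever p ∈ P, q ∈ Q ∩ P, ⊥ ≠ q ≤ π(p) and R(p, π(p)). Then for every p̄ ∈ P^ℤ_f and every ŵ ∈ P̂ with ŵ ≤ p̄(0), there exists w̄ ∈ P^ℤ_f such that w̄(0) = ŵ, w̄ ≤ p̄, w̄ ≤ e(ŵ), and every r̄ ∈ P^ℤ_f with r̄ ≤ p̄ and r̄ ≤ e(ŵ) satisfies r̄ ≤ w̄; that is, the meet e(ŵ)·p̄ exists in P^ℤ_f and its zeroth coordinate is ŵ. -/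
namespace Stmt7

variable {B : Type*} [CompleteBooleanAlgebra B]

/-- `A` is a complete subalgebra of the complete Boolean algebra `B`. -/
def IsCompleteSubalgebra (A : Set B) : Prop :=
  ⊤ ∈ A ∧ (∀ a ∈ A, aᶜ ∈ A) ∧ ∀ S ⊆ A, sSup S ∈ A

/-- The canonical projection onto `A`. -/
def proj (A : Set B) (b : B) : B := sInf {a | a ∈ A ∧ b ≤ a}

/-- The meet `m(p̂) = p ⊓ b₀ ⊓ b₁` of the components of a triple. -/
def bm (t : B × B × B) : B := t.1 ⊓ t.2.1 ⊓ t.2.2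

/-- The ordering of the blowup: `p̂ ≤ q̂` iff `p̂^P ≤ q̂^P` and `m(p̂) ≤ m(q̂)`. -/
def bLE (t s : B × B × B) : Prop := t.1 ≤ s.1 ∧ bm t ≤ bm s

/-- The amalgamation setting of the paper: complete subalgebras `Q ⊆ B₀ ∩ B₁`
of `B`, a set `P` of nonzero elements of `B`, an isomorphism `f : B₀ → B₁`
fixing `Q` pointwise and commuting with the projection to `Q`, and a binary
relation `R` on `P` (playing the role of `≤ᵒ^{λ₀}` to `Q`-parts) such that
`π(p) ∈ P` and `R(π(p), π(p))` for every `p ∈ P`. -/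
structure Setting (B : Type*) [CompleteBooleanAlgebra B] where
  Q : Set B
  B0 : Set B
  B1 : Set B
  P : Set B
  R : B → B → Prop
  hQ : IsCompleteSubalgebra Q
  hB0 : IsCompleteSubalgebra B0
  hB1 : IsCompleteSubalgebra B1
  hQB0 : Q ⊆ B0
  hQB1 : Q ⊆ B1
  hPne : ∀ p ∈ P, p ≠ ⊥
  f : B → B
  finv : B → B
  f_mem : ∀ b ∈ B0, f b ∈ B1
  finv_mem : ∀ b ∈ B1, finv b ∈ B0
  finv_f : ∀ b ∈ B0, finv (f b) = b
  f_finv : ∀ b ∈ B1, f (finv b) = b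
  f_inf : ∀ a ∈ B0, ∀ b ∈ B0, f (a ⊓ b) = f a ⊓ f b
  f_sup : ∀ a ∈ B0, ∀ b ∈ B0, f (a ⊔ b) = f a ⊔ f b
  f_compl : ∀ a ∈ B0, f aᶜ = (f a)ᶜ
  f_fixQ : ∀ q ∈ Q, f q = q
  f_proj : ∀ b ∈ B0, proj Q (f b) = proj Q b
  R_proj_mem : ∀ p ∈ P, proj Q p ∈ P
  R_proj_refl : ∀ p ∈ P, R (proj Q p) (proj Q p)

/-- `F(x) = f(π₀(x))`. -/
def Setting.F (S : Setting B) (x : B) : B := S.f (proj S.B0 x)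

/-- `G(x) = f⁻¹(π₁(x))`. -/
def Setting.G (S : Setting B) (x : B) : B := S.finv (proj S.B1 x)

/-- Membership in the blowup `P̂`. -/
def Setting.InBlowup (S : Setting B) (t : B × B × B) : Prop :=
  t.1 ∈ S.P ∧ t.2.1 ∈ S.B0 ∧ t.2.2 ∈ S.B1 ∧ proj S.Q (bm t) = proj S.Q t.1

/-- Membership in the amalgamation `P^ℤ_f`: each coordinate is in the blowup,
the linking equations hold, and `R(p̄(k)^P, π(p̄(k)^P))` for all but finitely
many `k`. -/
def Setting.InAmalg (S : Setting B) (pb : ℤ → B × B × B) : Prop :=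
  (∀ k : ℤ, S.InBlowup (pb k)) ∧
  (∀ k : ℤ, S.f (proj S.B0 (bm (pb k))) = proj S.B1 (bm (pb (k + 1)))) ∧
  {k : ℤ | ¬ S.R (pb k).1 (proj S.Q (pb k).1)}.Finite

/-- The coordinatewise ordering of the amalgamation. -/
def amLE (pb qb : ℤ → B × B × B) : Prop := ∀ k : ℤ, bLE (pb k) (qb k)

/-- The embedding `e : P̂ → P^ℤ_f`. -/
def Setting.e (S : Setting B) (u : B × B × B) : ℤ → B × B × B := fun i =>
  if i = 0 then u
  else if 0 < i then (proj S.Q u.1, ⊤, (S.F)^[i.toNat] (bm u))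
  else (proj S.Q u.1, (S.G)^[(-i).toNat] (bm u), ⊤)

/-!
The meet is built outwards from the zeroth coordinate. Its `m`-values form the chain
`c₀ = m(ŵ)`, `c_{k+1} = m(p̄(k+1)) ⊓ F(c_k)` for `k ≥ 0` and `c_{k-1} = m(p̄(k-1)) ⊓ G(c_k)` for
`k ≤ 0`. Since `F` is monotone with values in `B₁` and `F(m(p̄(k))) = π₁(m(p̄(k+1)))`, one gets
`π₁(c_{k+1}) = F(c_k)` (symmetrically for `G`): the chain satisfies the linking equations, keeps
`π(c_k) = π(ŵ^P) =: q`, and by induction dominates the `m`-values of every common lower bound of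
`p̄` and `e(ŵ)`. Away from `0` the meet is `(q ⊓ p̄(k)^P, b₀ ⊓ π₀(c_k), b₁ ⊓ π₁(c_k))`, whose
`m`-value is `c_k`; the hypotheses on `P` and `R` put `q ⊓ p̄(k)^P` into `P` and keep the set
where `R` fails finite.
-/

namespace IsCompleteSubalgebra

variable {A : Set B}

lemma compl_mem (hA : IsCompleteSubalgebra A) {a : B} (ha : a ∈ A) : aᶜ ∈ A := hA.2.1 a ha

lemma sSup_mem (hA : IsCompleteSubalgebra A) {T : Set B} (hT : T ⊆ A) : sSup T ∈ A :=
  hA.2.2 T hT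

lemma sInf_mem (hA : IsCompleteSubalgebra A) {T : Set B} (hT : T ⊆ A) : sInf T ∈ A := by
  rw [← compl_compl (sInf T), compl_sInf']
  exact hA.compl_mem (hA.sSup_mem (Set.image_subset_iff.2 fun a ha => hA.compl_mem (hT ha)))

lemma inf_mem (hA : IsCompleteSubalgebra A) {a b : B} (ha : a ∈ A) (hb : b ∈ A) :
    a ⊓ b ∈ A := by
  rw [← sInf_pair]
  exact hA.sInf_mem (Set.pair_subset ha hb)

lemma sup_mem (hA : IsCompleteSubalgebra A) {a b : B} (ha : a ∈ A) (hb : b ∈ A) :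
    a ⊔ b ∈ A := by
  rw [← sSup_pair]
  exact hA.sSup_mem (Set.pair_subset ha hb)

lemma proj_mem (hA : IsCompleteSubalgebra A) (b : B) : proj A b ∈ A :=
  hA.sInf_mem fun _ ha => ha.1

end IsCompleteSubalgebra

section Proj

variable {A : Set B}

lemma le_proj (A : Set B) (b : B) : b ≤ proj A b := le_sInf fun _ ha => ha.2

lemma proj_le {a b : B} (ha : a ∈ A) (h : b ≤ a) : proj A b ≤ a := sInf_le ⟨ha, h⟩

lemma proj_mono : Monotone (proj A) := fun _ _ h =>
  le_sInf fun _ ha => sInf_le ⟨ha.1, h.trans ha.2⟩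

lemma proj_proj {Q : Set B} (hQA : Q ⊆ A) (x : B) : proj Q (proj A x) = proj Q x :=
  le_antisymm (le_sInf fun _ ha => sInf_le ⟨ha.1, proj_le (hQA ha.1) ha.2⟩)
    (proj_mono (le_proj A x))

lemma proj_inf (hA : IsCompleteSubalgebra A) {a : B} (ha : a ∈ A) (x : B) :
    proj A (x ⊓ a) = proj A x ⊓ a := by
  refine le_antisymm (le_inf (proj_mono inf_le_left) (proj_le ha inf_le_right)) ?_
  have hx : x ≤ aᶜ ⊔ proj A (x ⊓ a) :=
    calc x = (x ⊓ aᶜ) ⊔ (x ⊓ a) := by rw [← inf_sup_left, compl_sup_eq_top, inf_top_eq]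
      _ ≤ aᶜ ⊔ proj A (x ⊓ a) := sup_le_sup inf_le_right (le_proj _ _)
  calc proj A x ⊓ a ≤ (aᶜ ⊔ proj A (x ⊓ a)) ⊓ a :=
        inf_le_inf_right a (proj_le (hA.sup_mem (hA.compl_mem ha) (hA.proj_mem _)) hx)
    _ ≤ proj A (x ⊓ a) := by rw [inf_sup_right, compl_inf_self, bot_sup_eq]; exact inf_le_left

lemma proj_inf_of_le (hA : IsCompleteSubalgebra A) {a x : B} (ha : a ∈ A) (h : a ≤ proj A x) :
    proj A (a ⊓ x) = a := by
  rw [inf_comm, proj_inf hA ha, inf_eq_right.2 h]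

end Proj

lemma bm_le_fst (t : B × B × B) : bm t ≤ t.1 := inf_le_left.trans inf_le_left

lemma bm_inf_inf_inf {q a₀ a₁ c : B} (t : B × B × B) (hc : bm t ⊓ a₀ ⊓ a₁ = c) (hcq : c ≤ q) :
    bm (q ⊓ t.1, t.2.1 ⊓ a₀, t.2.2 ⊓ a₁) = c := by
  calc bm (q ⊓ t.1, t.2.1 ⊓ a₀, t.2.2 ⊓ a₁) = q ⊓ (bm t ⊓ a₀ ⊓ a₁) := by simp only [bm]; ac_rfl
    _ = c := by rw [hc, inf_eq_right.2 hcq]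

section Chain

variable {g : B → B} {m : ℕ → B} {u : B}

def chain (g : B → B) (m : ℕ → B) (u : B) : ℕ → B
  | 0 => u
  | n + 1 => m (n + 1) ⊓ g (chain g m u n)

lemma chain_le (hu : u ≤ m 0) : ∀ n, chain g m u n ≤ m n
  | 0 => hu
  | _ + 1 => inf_le_left

lemma chain_le_iterate (hg : Monotone g) : ∀ n, chain g m u n ≤ g^[n] u
  | 0 => le_rfl
  | n + 1 => by
    rw [Function.iterate_succ_apply']
    exact inf_le_right.trans (hg (chain_le_iterate hg n))

lemma le_chain (hg : Monotone g) {r : ℕ → B} (hr₀ : r 0 ≤ u) (hrm : ∀ n, r n ≤ m n)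
    (hrg : ∀ n, r (n + 1) ≤ g (r n)) : ∀ n, r n ≤ chain g m u n
  | 0 => hr₀
  | n + 1 => le_inf (hrm _) ((hrg n).trans (hg (le_chain hg hr₀ hrm hrg n)))

variable {C : Set B}

lemma proj_chain_succ (hC : IsCompleteSubalgebra C) (hgC : ∀ x, g x ∈ C) (hg : Monotone g)
    (hm : ∀ n, g (m n) = proj C (m (n + 1))) (hu : u ≤ m 0) (n : ℕ) :
    proj C (chain g m u (n + 1)) = g (chain g m u n) := by
  rw [chain, proj_inf hC (hgC _), ← hm, inf_eq_right]
  exact hg (chain_le hu n)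

lemma proj_chain {Q : Set B} (hQC : Q ⊆ C) (hgQ : ∀ x, proj Q (g x) = proj Q x)
    (hC : IsCompleteSubalgebra C) (hgC : ∀ x, g x ∈ C) (hg : Monotone g)
    (hm : ∀ n, g (m n) = proj C (m (n + 1))) (hu : u ≤ m 0) :
    ∀ n, proj Q (chain g m u n) = proj Q u
  | 0 => rfl
  | n + 1 => by
    rw [← proj_proj hQC, proj_chain_succ hC hgC hg hm hu, hgQ,
      proj_chain hQC hgQ hC hgC hg hm hu n]

end Chain

namespace Setting

variable (S : Setting B)

lemma f_le_f_iff {a b : B} (ha : a ∈ S.B0) (hb : b ∈ S.B0) : S.f a ≤ S.f b ↔ a ≤ b := by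
  rw [← inf_eq_left, ← S.f_inf a ha b hb, ← inf_eq_left (a := a)]
  refine ⟨fun h => ?_, fun h => by rw [h]⟩
  rw [← S.finv_f _ (S.hB0.inf_mem ha hb), h, S.finv_f a ha]

lemma F_mem (x : B) : S.F x ∈ S.B1 := S.f_mem _ (S.hB0.proj_mem x)

lemma G_mem (x : B) : S.G x ∈ S.B0 := S.finv_mem _ (S.hB1.proj_mem x)

lemma f_G (x : B) : S.f (S.G x) = proj S.B1 x := S.f_finv _ (S.hB1.proj_mem x)

lemma F_mono : Monotone S.F := fun _ _ h =>
  (S.f_le_f_iff (S.hB0.proj_mem _) (S.hB0.proj_mem _)).2 (proj_mono h)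

lemma G_mono : Monotone S.G := fun x y h =>
  (S.f_le_f_iff (S.G_mem x) (S.G_mem y)).1 (by rw [f_G, f_G]; exact proj_mono h)

lemma F_eq_proj_iff {x y : B} : S.F x = proj S.B1 y ↔ S.G y = proj S.B0 x :=
  ⟨fun h => by rw [G, ← h, F, S.finv_f _ (S.hB0.proj_mem x)], fun h => by rw [F, ← h, f_G]⟩

lemma proj_F (x : B) : proj S.Q (S.F x) = proj S.Q x := by
  rw [F, S.f_proj _ (S.hB0.proj_mem x), proj_proj S.hQB0]

lemma proj_G (x : B) : proj S.Q (S.G x) = proj S.Q x := by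
  rw [← S.f_proj _ (S.G_mem x), f_G, proj_proj S.hQB1]

lemma e_zero (u : B × B × B) : S.e u 0 = u := if_pos rfl

lemma e_fst {k : ℤ} (hk : k ≠ 0) (u : B × B × B) : (S.e u k).1 = proj S.Q u.1 := by
  simp only [e, if_neg hk]
  split_ifs <;> rfl

lemma e_natCast {n : ℕ} (hn : n ≠ 0) (u : B × B × B) :
    S.e u n = (proj S.Q u.1, ⊤, S.F^[n] (bm u)) := by
  simp [e, hn, Nat.pos_of_ne_zero hn]

lemma e_neg_natCast {n : ℕ} (hn : n ≠ 0) (u : B × B × B) :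
    S.e u (-n) = (proj S.Q u.1, S.G^[n] (bm u), ⊤) := by
  simp [e, hn]

namespace InAmalg

variable {S} {pb : ℤ → B × B × B}

lemma F_bm (hpb : S.InAmalg pb) (k : ℤ) : S.F (bm (pb k)) = proj S.B1 (bm (pb (k + 1))) :=
  hpb.2.1 k

lemma G_bm_neg (hpb : S.InAmalg pb) (n : ℕ) :
    S.G (bm (pb (-n))) = proj S.B0 (bm (pb (-(n + 1 : ℕ)))) := by
  rw [← S.F_eq_proj_iff, hpb.F_bm]
  push_cast
  ring_nf

lemma bm_succ_le_F (hpb : S.InAmalg pb) (k : ℤ) : bm (pb (k + 1)) ≤ S.F (bm (pb k)) := by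
  rw [hpb.F_bm]
  exact le_proj _ _

lemma bm_neg_succ_le_G (hpb : S.InAmalg pb) (n : ℕ) :
    bm (pb (-(n + 1 : ℕ))) ≤ S.G (bm (pb (-n))) := by
  rw [hpb.G_bm_neg]
  exact le_proj _ _

end InAmalg

/-- The `m`-values `c_k` of the meet `e(ŵ)·p̄`, for `u = m(ŵ)`. -/
def meetChain (pb : ℤ → B × B × B) (u : B) : ℤ → B
  | Int.ofNat n => chain S.F (fun n => bm (pb n)) u n
  | Int.negSucc n => chain S.G (fun n => bm (pb (-n))) u (n + 1)

/-- The meet `e(ŵ)·p̄`. -/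
def meetSeq (pb : ℤ → B × B × B) (w : B × B × B) : ℤ → B × B × B := fun k =>
  if k = 0 then w
  else (proj S.Q w.1 ⊓ (pb k).1, (pb k).2.1 ⊓ proj S.B0 (S.meetChain pb (bm w) k),
    (pb k).2.2 ⊓ proj S.B1 (S.meetChain pb (bm w) k))

variable {S} {pb : ℤ → B × B × B} {u : B}

lemma meetChain_neg (n : ℕ) :
    S.meetChain pb u (-n) = chain S.G (fun n => bm (pb (-n))) u n := by
  cases n <;> rfl

lemma meetChain_le_bm (hu : u ≤ bm (pb 0)) (k : ℤ) :
    S.meetChain pb u k ≤ bm (pb k) := by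
  obtain ⟨n, rfl | rfl⟩ := k.eq_nat_or_neg
  · exact chain_le hu n
  · rw [meetChain_neg]
    exact chain_le hu n

lemma proj_B1_meetChain_natCast_succ (hpb : S.InAmalg pb) (hu : u ≤ bm (pb 0)) (n : ℕ) :
    proj S.B1 (S.meetChain pb u (n + 1 : ℕ)) = S.F (S.meetChain pb u n) :=
  proj_chain_succ S.hB1 S.F_mem S.F_mono (fun n => hpb.F_bm n) hu n

lemma proj_B0_meetChain_neg_succ (hpb : S.InAmalg pb) (hu : u ≤ bm (pb 0)) (n : ℕ) :
    proj S.B0 (S.meetChain pb u (-(n + 1 : ℕ))) = S.G (S.meetChain pb u (-n)) := by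
  simp only [meetChain_neg]
  exact proj_chain_succ S.hB0 S.G_mem S.G_mono hpb.G_bm_neg hu n

lemma F_meetChain (hpb : S.InAmalg pb) (hu : u ≤ bm (pb 0)) (k : ℤ) :
    S.F (S.meetChain pb u k) = proj S.B1 (S.meetChain pb u (k + 1)) := by
  obtain ⟨n, rfl | rfl⟩ := k.eq_nat_or_neg
  · exact (proj_B1_meetChain_natCast_succ hpb hu n).symm
  · cases n with
    | zero => exact (proj_B1_meetChain_natCast_succ hpb hu 0).symm
    | succ n =>
      rw [S.F_eq_proj_iff, proj_B0_meetChain_neg_succ hpb hu n]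
      congr 2
      push_cast
      ring

lemma proj_meetChain (hpb : S.InAmalg pb) (hu : u ≤ bm (pb 0)) (k : ℤ) :
    proj S.Q (S.meetChain pb u k) = proj S.Q u := by
  obtain ⟨n, rfl | rfl⟩ := k.eq_nat_or_neg
  · exact proj_chain S.hQB1 S.proj_F S.hB1 S.F_mem S.F_mono (fun n => hpb.F_bm n) hu n
  · rw [meetChain_neg]
    exact proj_chain S.hQB0 S.proj_G S.hB0 S.G_mem S.G_mono hpb.G_bm_neg hu n

lemma bm_inf_proj_meetChain (hpb : S.InAmalg pb) (hu : u ≤ bm (pb 0)) {k : ℤ} (hk : k ≠ 0) :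
    bm (pb k) ⊓ proj S.B0 (S.meetChain pb u k) ⊓ proj S.B1 (S.meetChain pb u k) =
      S.meetChain pb u k := by
  refine le_antisymm ?_ (le_inf (le_inf (meetChain_le_bm hu k) (le_proj _ _)) (le_proj _ _))
  obtain ⟨_ | n, rfl | rfl⟩ := k.eq_nat_or_neg
  · exact absurd rfl hk
  · exact absurd (neg_zero (G := ℤ)) hk
  · calc _ ≤ bm (pb (n + 1 : ℕ)) ⊓ proj S.B1 (S.meetChain pb u (n + 1 : ℕ)) :=
          inf_le_inf_right _ inf_le_left
      _ = S.meetChain pb u (n + 1 : ℕ) := by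
          rw [proj_B1_meetChain_natCast_succ hpb hu]; rfl
  · calc _ ≤ bm (pb (-(n + 1 : ℕ))) ⊓ proj S.B0 (S.meetChain pb u (-(n + 1 : ℕ))) :=
          inf_le_left
      _ = S.meetChain pb u (-(n + 1 : ℕ)) := by
          rw [proj_B0_meetChain_neg_succ hpb hu, meetChain_neg, meetChain_neg]; rfl

lemma bm_le_meetChain {rb : ℤ → B × B × B} (hrb : S.InAmalg rb)
    (hrp : ∀ k, bm (rb k) ≤ bm (pb k)) (hr₀ : bm (rb 0) ≤ u) (k : ℤ) :
    bm (rb k) ≤ S.meetChain pb u k := by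
  obtain ⟨n, rfl | rfl⟩ := k.eq_nat_or_neg
  · exact le_chain S.F_mono (r := fun n => bm (rb n)) hr₀ (fun n => hrp n)
      (fun n => hrb.bm_succ_le_F n) n
  · rw [meetChain_neg]
    exact le_chain S.G_mono (r := fun n => bm (rb (-n))) hr₀ (fun n => hrp _)
      hrb.bm_neg_succ_le_G n

section MeetSeq

variable {w : B × B × B}

lemma meetChain_le_proj_fst (hw : S.InBlowup w) (hpb : S.InAmalg pb) (hwle : bm w ≤ bm (pb 0))
    (k : ℤ) : S.meetChain pb (bm w) k ≤ proj S.Q w.1 :=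
  (le_proj _ _).trans_eq ((proj_meetChain hpb hwle k).trans hw.2.2.2)

lemma proj_fst_le (hw : S.InBlowup w) (hpb : S.InAmalg pb) (hwle : bm w ≤ bm (pb 0)) (k : ℤ) :
    proj S.Q w.1 ≤ proj S.Q (pb k).1 :=
  calc proj S.Q w.1 = proj S.Q (S.meetChain pb (bm w) k) :=
        ((proj_meetChain hpb hwle k).trans hw.2.2.2).symm
    _ ≤ proj S.Q (pb k).1 := proj_mono ((meetChain_le_bm hwle k).trans (bm_le_fst _))

lemma meetChain_le_bm_e (hw : S.InBlowup w) (hpb : S.InAmalg pb) (hwle : bm w ≤ bm (pb 0))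
    (k : ℤ) : S.meetChain pb (bm w) k ≤ bm (S.e w k) := by
  have hq := meetChain_le_proj_fst hw hpb hwle k
  obtain ⟨n, rfl | rfl⟩ := k.eq_nat_or_neg
  · rcases eq_or_ne n 0 with rfl | hn
    · exact le_rfl
    · rw [S.e_natCast hn]
      exact le_inf (le_inf hq le_top) (chain_le_iterate S.F_mono n)
  · rcases eq_or_ne n 0 with rfl | hn
    · exact le_rfl
    · rw [S.e_neg_natCast hn, meetChain_neg] at *
      exact le_inf (le_inf hq (chain_le_iterate S.G_mono n)) le_top

lemma meetSeq_zero : S.meetSeq pb w 0 = w := if_pos rfl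

lemma meetSeq_fst {k : ℤ} (hk : k ≠ 0) : (S.meetSeq pb w k).1 = proj S.Q w.1 ⊓ (pb k).1 := by
  rw [meetSeq, if_neg hk]

lemma bm_meetSeq (hw : S.InBlowup w) (hpb : S.InAmalg pb) (hwle : bm w ≤ bm (pb 0)) (k : ℤ) :
    bm (S.meetSeq pb w k) = S.meetChain pb (bm w) k := by
  rcases eq_or_ne k 0 with rfl | hk
  · rfl
  · rw [meetSeq, if_neg hk]
    exact bm_inf_inf_inf _ (bm_inf_proj_meetChain hpb hwle hk)
      (meetChain_le_proj_fst hw hpb hwle k)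

lemma meetSeq_inBlowup (h_meet : ∀ p ∈ S.P, ∀ q ∈ S.Q, q ≠ ⊥ → q ≤ proj S.Q p → q ⊓ p ∈ S.P)
    (hw : S.InBlowup w) (hpb : S.InAmalg pb) (hwle : bm w ≤ bm (pb 0)) (k : ℤ) :
    S.InBlowup (S.meetSeq pb w k) := by
  rcases eq_or_ne k 0 with rfl | hk
  · exact hw
  have hqQ := S.hQ.proj_mem w.1
  have hqne := ne_bot_of_le_ne_bot (S.hPne _ hw.1) (le_proj S.Q w.1)
  refine ⟨?_, ?_, ?_, ?_⟩
  · rw [meetSeq_fst hk]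
    exact h_meet _ (hpb.1 k).1 _ hqQ hqne (proj_fst_le hw hpb hwle k)
  · rw [meetSeq, if_neg hk]
    exact S.hB0.inf_mem (hpb.1 k).2.1 (S.hB0.proj_mem _)
  · rw [meetSeq, if_neg hk]
    exact S.hB1.inf_mem (hpb.1 k).2.2.1 (S.hB1.proj_mem _)
  · rw [bm_meetSeq hw hpb hwle, proj_meetChain hpb hwle, hw.2.2.2, meetSeq_fst hk,
      proj_inf_of_le S.hQ hqQ (proj_fst_le hw hpb hwle k)]

lemma meetSeq_inAmalg (h_meet : ∀ p ∈ S.P, ∀ q ∈ S.Q, q ≠ ⊥ → q ≤ proj S.Q p → q ⊓ p ∈ S.P)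
    (h_Rmeet : ∀ p ∈ S.P, ∀ q, q ∈ S.Q → q ∈ S.P → q ≠ ⊥ → q ≤ proj S.Q p →
      S.R p (proj S.Q p) → S.R (q ⊓ p) q)
    (hw : S.InBlowup w) (hpb : S.InAmalg pb) (hwle : bm w ≤ bm (pb 0)) :
    S.InAmalg (S.meetSeq pb w) := by
  refine ⟨meetSeq_inBlowup h_meet hw hpb hwle, fun k => ?_, ?_⟩
  · rw [bm_meetSeq hw hpb hwle, bm_meetSeq hw hpb hwle]
    exact F_meetChain hpb hwle k
  · refine (hpb.2.2.insert 0).subset fun k hk => ?_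
    rcases eq_or_ne k 0 with rfl | hk0
    · exact Set.mem_insert _ _
    refine Set.mem_insert_of_mem _ fun hR => hk ?_
    have hqQ := S.hQ.proj_mem w.1
    have hwq := proj_fst_le hw hpb hwle k
    rw [meetSeq_fst hk0, proj_inf_of_le S.hQ hqQ hwq]
    exact h_Rmeet _ (hpb.1 k).1 _ hqQ (S.R_proj_mem _ hw.1)
      (ne_bot_of_le_ne_bot (S.hPne _ hw.1) (le_proj S.Q w.1)) hwq hR

lemma meetSeq_le (hw : S.InBlowup w) (hpb : S.InAmalg pb) (hwle : bLE w (pb 0)) :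
    amLE (S.meetSeq pb w) pb := by
  intro k
  rcases eq_or_ne k 0 with rfl | hk
  · rw [meetSeq_zero]
    exact hwle
  · refine ⟨?_, ?_⟩
    · rw [meetSeq_fst hk]
      exact inf_le_right
    · rw [bm_meetSeq hw hpb hwle.2]
      exact meetChain_le_bm hwle.2 k

lemma meetSeq_le_e (hw : S.InBlowup w) (hpb : S.InAmalg pb) (hwle : bm w ≤ bm (pb 0)) :
    amLE (S.meetSeq pb w) (S.e w) := by
  intro k
  rcases eq_or_ne k 0 with rfl | hk
  · rw [meetSeq_zero, e_zero]
    exact ⟨le_rfl, le_rfl⟩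
  · refine ⟨?_, ?_⟩
    · rw [meetSeq_fst hk, e_fst _ hk]
      exact inf_le_left
    · rw [bm_meetSeq hw hpb hwle]
      exact meetChain_le_bm_e hw hpb hwle k

lemma le_meetSeq (hw : S.InBlowup w) (hpb : S.InAmalg pb) (hwle : bm w ≤ bm (pb 0))
    {rb : ℤ → B × B × B} (hrb : S.InAmalg rb) (hrp : amLE rb pb) (hre : amLE rb (S.e w)) :
    amLE rb (S.meetSeq pb w) := by
  intro k
  have hr₀ : bLE (rb 0) w := S.e_zero w ▸ hre 0
  refine ⟨?_, ?_⟩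
  · rcases eq_or_ne k 0 with rfl | hk
    · rw [meetSeq_zero]
      exact hr₀.1
    · rw [meetSeq_fst hk]
      exact le_inf ((S.e_fst hk w) ▸ (hre k).1) (hrp k).1
  · rw [bm_meetSeq hw hpb hwle]
    exact bm_le_meetChain hrb (fun k => (hrp k).2) hr₀.2 k

end MeetSeq

end Setting

/-- Lemma 4.2: the zeroth-coordinate map is a strong projection
from the amalgamation onto the blowup: the meet `e(ŵ)·p̄` exists in `P^ℤ_f`
and its zeroth coordinate is `ŵ`. -/
theorem strong_projection_onto_blowup (S : Setting B)
    (h_meet : ∀ p ∈ S.P, ∀ q ∈ S.Q, q ≠ ⊥ → q ≤ proj S.Q p → q ⊓ p ∈ S.P)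
    (h_Rmeet : ∀ p ∈ S.P, ∀ q, q ∈ S.Q → q ∈ S.P → q ≠ ⊥ → q ≤ proj S.Q p →
      S.R p (proj S.Q p) → S.R (q ⊓ p) q)
    (pb : ℤ → B × B × B) (hpb : S.InAmalg pb)
    (w : B × B × B) (hw : S.InBlowup w) (hwle : bLE w (pb 0)) :
    ∃ wb : ℤ → B × B × B, S.InAmalg wb ∧ wb 0 = w ∧
      amLE wb pb ∧ amLE wb (S.e w) ∧
      ∀ rb : ℤ → B × B × B, S.InAmalg rb → amLE rb pb → amLE rb (S.e w) →
        amLE rb wb :=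
  ⟨S.meetSeq pb w, Setting.meetSeq_inAmalg h_meet h_Rmeet hw hpb hwle.2,
    Setting.meetSeq_zero, Setting.meetSeq_le hw hpb hwle,
    Setting.meetSeq_le_e hw hpb hwle.2,
    fun _ hrb hrp hre => Setting.le_meetSeq hw hpb hwle.2 hrb hrp hre⟩

end Stmt7
end

section
/- (The paper's Corollary: Φ is an automorphism of P^ℤ_f extending f.) Define Φ : P^ℤ_f → P^ℤ_f by Φ(p̄)(i) = p̄(i+1). Then Φ is a well-defined bijection of P^ℤ_f onto itself and for all p̄, q̄ ∈ P^ℤ_f one has p̄ ≤ q̄ if and only if Φ(p̄) ≤ Φ(q̄). Moreover Φ extends f in the following sense: for every b ∈ B₀ with b ≠ ⊥ and π(b) ∈ P, the triples û = (π(b), b, ⊤) and v̂ = (π(b), ⊤, f(b)) belong to P̂, and Φ(e(û)) and e(v̂) are equivalent elements of P^ℤ_f (each is ≤ the other). -/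
namespace Stmt8

variable {B : Type*} [CompleteBooleanAlgebra B]

/-- `A` is a complete subalgebra of the complete Boolean algebra `B`. -/
def IsCompleteSubalgebra (A : Set B) : Prop :=
  ⊤ ∈ A ∧ (∀ a ∈ A, aᶜ ∈ A) ∧ ∀ S ⊆ A, sSup S ∈ A

/-- The canonical projection onto `A`. -/
def proj (A : Set B) (b : B) : B := sInf {a | a ∈ A ∧ b ≤ a}

/-- The meet `m(p̂) = p ⊓ b₀ ⊓ b₁` of the components of a triple. -/
def bm (t : B × B × B) : B := t.1 ⊓ t.2.1 ⊓ t.2.2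

/-- The ordering of the blowup: `p̂ ≤ q̂` iff `p̂^P ≤ q̂^P` and `m(p̂) ≤ m(q̂)`. -/
def bLE (t s : B × B × B) : Prop := t.1 ≤ s.1 ∧ bm t ≤ bm s

/-- The amalgamation setting of the paper: complete subalgebras `Q ⊆ B₀ ∩ B₁`
of `B`, a set `P` of nonzero elements of `B`, an isomorphism `f : B₀ → B₁`
fixing `Q` pointwise and commuting with the projection to `Q`, and a binary
relation `R` on `P` (playing the role of `≤ᵒ^{λ₀}` to `Q`-parts) such that
`π(p) ∈ P` and `R(π(p), π(p))` for every `p ∈ P`. -/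
structure Setting (B : Type*) [CompleteBooleanAlgebra B] where
  Q : Set B
  B0 : Set B
  B1 : Set B
  P : Set B
  R : B → B → Prop
  hQ : IsCompleteSubalgebra Q
  hB0 : IsCompleteSubalgebra B0
  hB1 : IsCompleteSubalgebra B1
  hQB0 : Q ⊆ B0
  hQB1 : Q ⊆ B1
  hPne : ∀ p ∈ P, p ≠ ⊥
  f : B → B
  finv : B → B
  f_mem : ∀ b ∈ B0, f b ∈ B1
  finv_mem : ∀ b ∈ B1, finv b ∈ B0
  finv_f : ∀ b ∈ B0, finv (f b) = b
  f_finv : ∀ b ∈ B1, f (finv b) = b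
  f_inf : ∀ a ∈ B0, ∀ b ∈ B0, f (a ⊓ b) = f a ⊓ f b
  f_sup : ∀ a ∈ B0, ∀ b ∈ B0, f (a ⊔ b) = f a ⊔ f b
  f_compl : ∀ a ∈ B0, f aᶜ = (f a)ᶜ
  f_fixQ : ∀ q ∈ Q, f q = q
  f_proj : ∀ b ∈ B0, proj Q (f b) = proj Q b
  R_proj_mem : ∀ p ∈ P, proj Q p ∈ P
  R_proj_refl : ∀ p ∈ P, R (proj Q p) (proj Q p)

/-- `F(x) = f(π₀(x))`. -/
def Setting.F (S : Setting B) (x : B) : B := S.f (proj S.B0 x)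

/-- `G(x) = f⁻¹(π₁(x))`. -/
def Setting.G (S : Setting B) (x : B) : B := S.finv (proj S.B1 x)

/-- Membership in the blowup `P̂`. -/
def Setting.InBlowup (S : Setting B) (t : B × B × B) : Prop :=
  t.1 ∈ S.P ∧ t.2.1 ∈ S.B0 ∧ t.2.2 ∈ S.B1 ∧ proj S.Q (bm t) = proj S.Q t.1

/-- Membership in the amalgamation `P^ℤ_f`: each coordinate is in the blowup,
the linking equations hold, and `R(p̄(k)^P, π(p̄(k)^P))` for all but finitely
many `k`. -/
def Setting.InAmalg (S : Setting B) (pb : ℤ → B × B × B) : Prop :=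
  (∀ k : ℤ, S.InBlowup (pb k)) ∧
  (∀ k : ℤ, S.f (proj S.B0 (bm (pb k))) = proj S.B1 (bm (pb (k + 1)))) ∧
  {k : ℤ | ¬ S.R (pb k).1 (proj S.Q (pb k).1)}.Finite

/-- The coordinatewise ordering of the amalgamation. -/
def amLE (pb qb : ℤ → B × B × B) : Prop := ∀ k : ℤ, bLE (pb k) (qb k)

/-- The embedding `e : P̂ → P^ℤ_f`. -/
def Setting.e (S : Setting B) (u : B × B × B) : ℤ → B × B × B := fun i =>
  if i = 0 then u
  else if 0 < i then (proj S.Q u.1, ⊤, (S.F)^[i.toNat] (bm u))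
  else (proj S.Q u.1, (S.G)^[(-i).toNat] (bm u), ⊤)

/- ## Auxiliary lemmas -/

theorem aux_sInf_mem {A : Set B} (hA : IsCompleteSubalgebra A) {S : Set B} (hS : S ⊆ A) :
    sInf S ∈ A := by
  have h1 : sSup (compl '' S) ∈ A :=
    hA.2.2 _ (by rintro x ⟨a, ha, rfl⟩; exact hA.2.1 a (hS ha))
  have h2 := hA.2.1 _ h1
  have h3 : (sSup (compl '' S))ᶜ = sInf S := by
    rw [sSup_image]
    simp [compl_iSup, sInf_eq_iInf]
  rwa [h3] at h2

theorem aux_sup_mem {A : Set B} (hA : IsCompleteSubalgebra A) {a b : B}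
    (ha : a ∈ A) (hb : b ∈ A) : a ⊔ b ∈ A := by
  have := hA.2.2 {a, b} (by rintro x (rfl | rfl) <;> assumption)
  simpa using this

theorem aux_inf_mem {A : Set B} (hA : IsCompleteSubalgebra A) {a b : B}
    (ha : a ∈ A) (hb : b ∈ A) : a ⊓ b ∈ A := by
  have := hA.2.1 _ (aux_sup_mem hA (hA.2.1 a ha) (hA.2.1 b hb))
  simpa using this

theorem aux_proj_mem {A : Set B} (hA : IsCompleteSubalgebra A) (b : B) : proj A b ∈ A :=
  aux_sInf_mem hA (fun _ ha => ha.1)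

theorem aux_le_proj (A : Set B) (b : B) : b ≤ proj A b := le_sInf fun _ ha => ha.2

theorem aux_proj_le {A : Set B} {a b : B} (ha : a ∈ A) (h : b ≤ a) : proj A b ≤ a :=
  sInf_le ⟨ha, h⟩

theorem aux_proj_self {A : Set B} {a : B} (ha : a ∈ A) : proj A a = a :=
  le_antisymm (aux_proj_le ha le_rfl) (aux_le_proj A a)

theorem aux_proj_mono (A : Set B) {b c : B} (h : b ≤ c) : proj A b ≤ proj A c :=
  le_sInf fun _ ha => sInf_le ⟨ha.1, h.trans ha.2⟩

theorem aux_proj_inf {A : Set B} (hA : IsCompleteSubalgebra A) {q : B} (hq : q ∈ A) (x : B) :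
    proj A (q ⊓ x) = q ⊓ proj A x := by
  apply le_antisymm
  · exact le_inf (aux_proj_le hq inf_le_left) (aux_proj_mono A inf_le_right)
  · refine le_sInf fun a ha => ?_
    have hx : x ≤ a ⊔ qᶜ := by
      have h1 : x ⊓ q ≤ a := by rw [inf_comm]; exact ha.2
      have := (le_himp_iff (a := x) (b := q) (c := a)).2 h1
      rwa [himp_eq] at this
    have hp : proj A x ≤ a ⊔ qᶜ :=
      aux_proj_le (aux_sup_mem hA ha.1 (hA.2.1 q hq)) hx
    calc q ⊓ proj A x ≤ q ⊓ (a ⊔ qᶜ) := inf_le_inf_left q hp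
      _ ≤ a := by rw [inf_sup_left]; simp

theorem Setting.finv_fixQ (S : Setting B) {q : B} (hq : q ∈ S.Q) : S.finv q = q := by
  conv_lhs => rw [← S.f_fixQ q hq]
  exact S.finv_f q (S.hQB0 hq)

theorem Setting.finv_inf' (S : Setting B) {a b : B} (ha : a ∈ S.B1) (hb : b ∈ S.B1) :
    S.finv (a ⊓ b) = S.finv a ⊓ S.finv b := by
  have h1 := S.f_inf _ (S.finv_mem a ha) _ (S.finv_mem b hb)
  rw [S.f_finv a ha, S.f_finv b hb] at h1
  have h2 := congrArg S.finv h1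
  rw [S.finv_f _ (aux_inf_mem S.hB0 (S.finv_mem a ha) (S.finv_mem b hb))] at h2
  exact h2.symm

theorem Setting.F_infQ (S : Setting B) {q : B} (hq : q ∈ S.Q) (x : B) :
    S.F (q ⊓ x) = q ⊓ S.F x := by
  unfold Setting.F
  rw [aux_proj_inf S.hB0 (S.hQB0 hq), S.f_inf q (S.hQB0 hq) _ (aux_proj_mem S.hB0 _),
    S.f_fixQ q hq]

theorem Setting.G_infQ (S : Setting B) {q : B} (hq : q ∈ S.Q) (x : B) :
    S.G (q ⊓ x) = q ⊓ S.G x := by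
  unfold Setting.G
  rw [aux_proj_inf S.hB1 (S.hQB1 hq), S.finv_inf' (S.hQB1 hq) (aux_proj_mem S.hB1 _),
    S.finv_fixQ hq]

theorem Setting.F_iter_infQ (S : Setting B) {q : B} (hq : q ∈ S.Q) (n : ℕ) (x : B) :
    (S.F)^[n] (q ⊓ x) = q ⊓ (S.F)^[n] x := by
  induction n generalizing x with
  | zero => rfl
  | succ n ih =>
    rw [Function.iterate_succ_apply, Function.iterate_succ_apply, S.F_infQ hq, ih]

theorem Setting.G_iter_infQ (S : Setting B) {q : B} (hq : q ∈ S.Q) (n : ℕ) (x : B) :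
    (S.G)^[n] (q ⊓ x) = q ⊓ (S.G)^[n] x := by
  induction n generalizing x with
  | zero => rfl
  | succ n ih =>
    rw [Function.iterate_succ_apply, Function.iterate_succ_apply, S.G_infQ hq, ih]

theorem Setting.e_zero (S : Setting B) (u : B × B × B) : S.e u 0 = u := rfl

theorem Setting.e_pos (S : Setting B) (u : B × B × B) {i : ℤ} (hi : 0 < i) :
    S.e u i = (proj S.Q u.1, ⊤, (S.F)^[i.toNat] (bm u)) := by
  unfold Setting.e
  rw [if_neg (by omega), if_pos hi]

theorem Setting.e_neg (S : Setting B) (u : B × B × B) {i : ℤ} (hi : i < 0) :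
    S.e u i = (proj S.Q u.1, (S.G)^[(-i).toNat] (bm u), ⊤) := by
  unfold Setting.e
  rw [if_neg (by omega), if_neg (by omega)]

/-- the shift `Φ(p̄)(i) = p̄(i+1)` is a well-defined bijection of
the amalgamation onto itself, preserves and reflects the ordering, and extends
`f`: for every nonzero `b ∈ B₀` with `π(b) ∈ P`, the triples
`û = (π(b), b, ⊤)` and `v̂ = (π(b), ⊤, f(b))` lie in the blowup and
`Φ(e(û))` is equivalent to `e(v̂)`. -/
theorem shift_is_automorphism_extending_f (S : Setting B) :
    (∀ pb : ℤ → B × B × B, S.InAmalg pb ↔ S.InAmalg (fun i => pb (i + 1))) ∧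
    (∀ pb qb : ℤ → B × B × B, S.InAmalg pb → S.InAmalg qb →
      (amLE pb qb ↔ amLE (fun i => pb (i + 1)) (fun i => qb (i + 1)))) ∧
    (∀ b ∈ S.B0, b ≠ ⊥ → proj S.Q b ∈ S.P →
      S.InBlowup (proj S.Q b, b, ⊤) ∧ S.InBlowup (proj S.Q b, ⊤, S.f b) ∧
      amLE (fun i => S.e (proj S.Q b, b, ⊤) (i + 1)) (S.e (proj S.Q b, ⊤, S.f b)) ∧
      amLE (S.e (proj S.Q b, ⊤, S.f b)) (fun i => S.e (proj S.Q b, b, ⊤) (i + 1))) := by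
  refine ⟨?_, ?_, ?_⟩
  · intro pb
    constructor
    · rintro ⟨h1, h2, h3⟩
      refine ⟨fun k => h1 (k + 1), fun k => h2 (k + 1), ?_⟩
      have heq : {k : ℤ | ¬ S.R (pb (k + 1)).1 (proj S.Q (pb (k + 1)).1)} =
          (fun k : ℤ => k + 1) ⁻¹' {k | ¬ S.R (pb k).1 (proj S.Q (pb k).1)} := rfl
      rw [heq]
      exact h3.preimage (Set.injOn_of_injective fun a b h => by omega)
    · rintro ⟨h1, h2, h3⟩
      refine ⟨fun k => ?_, fun k => ?_, ?_⟩
      · have := h1 (k - 1)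
        simpa [show k - 1 + 1 = k by ring] using this
      · have := h2 (k - 1)
        simpa [show k - 1 + 1 = k by ring] using this
      · apply Set.Finite.subset (h3.image (fun k => k + 1))
        intro k hk
        refine ⟨k - 1, ?_, by ring⟩
        show ¬ S.R (pb (k - 1 + 1)).1 (proj S.Q (pb (k - 1 + 1)).1)
        simpa [show k - 1 + 1 = k by ring] using hk
  · intro pb qb _ _
    constructor
    · intro h k; exact h (k + 1)
    · intro h k
      have := h (k - 1)
      simpa [show k - 1 + 1 = k by ring] using this
  · intro b hb _ hbP
    set q := proj S.Q b with hqdef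
    have hqQ : q ∈ S.Q := aux_proj_mem S.hQ b
    have hqB0 : q ∈ S.B0 := S.hQB0 hqQ
    have hqB1 : q ∈ S.B1 := S.hQB1 hqQ
    have hfb : S.f b ∈ S.B1 := S.f_mem b hb
    have hbq : b ≤ q := aux_le_proj _ _
    have hqb : q ⊓ b = b := inf_eq_right.2 hbq
    have hbmu : bm ((q, b, ⊤) : B × B × B) = b := by
      show q ⊓ b ⊓ ⊤ = b
      rw [inf_top_eq, hqb]
    have hbmv : bm ((q, ⊤, S.f b) : B × B × B) = q ⊓ S.f b := by
      show q ⊓ ⊤ ⊓ S.f b = q ⊓ S.f b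
      rw [inf_top_eq]
    have hfinvq : S.finv q = q := S.finv_fixQ hqQ
    have hfq : S.f q = q := S.f_fixQ q hqQ
    have hprojq : proj S.Q q = q := aux_proj_self hqQ
    have hinB1 : q ⊓ S.f b ∈ S.B1 := aux_inf_mem S.hB1 hqB1 hfb
    have hFb : S.F b = S.f b := by
      unfold Setting.F; rw [aux_proj_self hb]
    have hGqfb : S.G (q ⊓ S.f b) = b := by
      unfold Setting.G
      rw [aux_proj_self hinB1, S.finv_inf' hqB1 hfb, hfinvq, S.finv_f b hb, hqb]
    have key : ∀ i : ℤ, (S.e (q, b, ⊤) (i + 1)).1 = (S.e (q, ⊤, S.f b) i).1 ∧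
        bm (S.e (q, b, ⊤) (i + 1)) = bm (S.e (q, ⊤, S.f b) i) := by
      intro i
      rcases lt_trichotomy i 0 with hi | rfl | hi
      · rcases eq_or_lt_of_le (show i ≤ -1 by omega) with rfl | hi2
        · -- i = -1
          rw [show (-1 : ℤ) + 1 = 0 by ring, S.e_zero, S.e_neg _ (by norm_num : (-1:ℤ) < 0)]
          constructor
          · show q = proj S.Q q
            rw [hprojq]
          · rw [hbmu, hbmv]
            show b = proj S.Q q ⊓ (S.G)^[((1:ℤ)).toNat] (q ⊓ S.f b) ⊓ ⊤
            rw [inf_top_eq, hprojq]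
            simp only [Int.toNat_one, Function.iterate_one, hGqfb, hqb]
        · -- i < -1
          have hi1 : i + 1 < 0 := by omega
          rw [S.e_neg _ hi1, S.e_neg _ hi]
          have hn : (-i).toNat = (-(i + 1)).toNat + 1 := by omega
          constructor
          · rfl
          · show proj S.Q q ⊓ (S.G)^[(-(i+1)).toNat] (bm (q, b, ⊤)) ⊓ ⊤ =
              proj S.Q q ⊓ (S.G)^[(-i).toNat] (bm (q, ⊤, S.f b)) ⊓ ⊤
            rw [hbmu, hbmv, hprojq, hn, Function.iterate_succ_apply, hGqfb]
      · -- i = 0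
        rw [S.e_zero, S.e_pos _ (by norm_num : (0:ℤ) < 0 + 1)]
        constructor
        · show proj S.Q q = q
          exact hprojq
        · rw [hbmv]
          show proj S.Q q ⊓ ⊤ ⊓ (S.F)^[((0:ℤ)+1).toNat] (bm (q, b, ⊤)) = q ⊓ S.f b
          rw [hbmu, hprojq, inf_top_eq]
          norm_num [hFb]
      · -- i > 0
        have hi1 : (0:ℤ) < i + 1 := by omega
        rw [S.e_pos _ hi1, S.e_pos _ hi]
        have hn : (i + 1).toNat = i.toNat + 1 := by omega
        constructor
        · rfl
        · show proj S.Q q ⊓ ⊤ ⊓ (S.F)^[(i+1).toNat] (bm (q, b, ⊤)) =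
            proj S.Q q ⊓ ⊤ ⊓ (S.F)^[i.toNat] (bm (q, ⊤, S.f b))
          rw [hbmu, hbmv, hprojq, hn, Function.iterate_succ_apply, hFb,
            S.F_iter_infQ hqQ, inf_top_eq, ← inf_assoc, inf_idem]
    refine ⟨⟨hbP, hb, S.hB1.1, ?_⟩, ⟨hbP, S.hB0.1, hfb, ?_⟩, ?_, ?_⟩
    · rw [hbmu, hprojq]
    · rw [hbmv, aux_proj_inf S.hQ hqQ, S.f_proj b hb, ← hqdef, inf_idem, hprojq]
    · intro k
      exact ⟨le_of_eq (key k).1, le_of_eq (key k).2⟩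
    · intro k
      exact ⟨le_of_eq (key k).1.symm, le_of_eq (key k).2.symm⟩

end Stmt8
end

section
/- (From the paper's Corollary 4.3.) Assume additionally that P is dense in B (for every b ∈ B with b ≠ ⊥ there is p ∈ P with p ≤ b), that q ⊓ p ∈ P whenever p ∈ P, q ∈ Q and ⊥ ≠ q ≤ π(p), and that R(q ⊓ p, q) whenever p ∈ P, q ∈ Q ∩ P, ⊥ ≠ q ≤ π(p) and R(p, π(p)). Then for every i ∈ ℤ, the set R_i = {p̄ ∈ P^ℤ_f : p̄(i) = (p̄(i)^P, ⊤, ⊤)} is dense in P^ℤ_f: every p̄ ∈ P^ℤ_f has an extension in R_i. -/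
/-!
Pick `p ∈ P` below the meet `m(p̄(i))` and put `q = π(p)`. The extension has `(p, ⊤, ⊤)` at `i`
and first coordinates `q ⊓ p̄(k)^P` elsewhere; its meets are `p` at `i`, propagated upwards by
`m_{k+1} = F(m_k) ⊓ m(p̄(k+1))` and downwards by `m_{k-1} = G(m_k) ⊓ m(p̄(k-1))`. The linking
equation of `p̄` at `k` gives `F(m_k) ≤ π₁(m(p̄(k+1)))`, hence `π₁(m_{k+1}) = F(m_k)`, which is the
linking equation of the extension (dually for `G`). Along a linked sequence `π(m_k)` is constant,
so `π(m_k) = q ≤ π(p̄(k)^P)` for every `k`: this is the blowup condition, and the closure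
hypotheses on `P` and `R` supply the remaining requirements.
-/

namespace Stmt9

variable {B : Type*} [CompleteBooleanAlgebra B]

/-- `A` is a complete subalgebra of the complete Boolean algebra `B`. -/
def IsCompleteSubalgebra (A : Set B) : Prop :=
  ⊤ ∈ A ∧ (∀ a ∈ A, aᶜ ∈ A) ∧ ∀ S ⊆ A, sSup S ∈ A

/-- The canonical projection onto `A`. -/
def proj (A : Set B) (b : B) : B := sInf {a | a ∈ A ∧ b ≤ a}

/-- The meet `m(p̂) = p ⊓ b₀ ⊓ b₁` of the components of a triple. -/
def bm (t : B × B × B) : B := t.1 ⊓ t.2.1 ⊓ t.2.2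

/-- The ordering of the blowup: `p̂ ≤ q̂` iff `p̂^P ≤ q̂^P` and `m(p̂) ≤ m(q̂)`. -/
def bLE (t s : B × B × B) : Prop := t.1 ≤ s.1 ∧ bm t ≤ bm s

/-- The amalgamation setting of the paper: complete subalgebras `Q ⊆ B₀ ∩ B₁`
of `B`, a set `P` of nonzero elements of `B`, an isomorphism `f : B₀ → B₁`
fixing `Q` pointwise and commuting with the projection to `Q`, and a binary
relation `R` on `P` (playing the role of `≤ᵒ^{λ₀}` to `Q`-parts) such that
`π(p) ∈ P` and `R(π(p), π(p))` for every `p ∈ P`. -/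
structure Setting (B : Type*) [CompleteBooleanAlgebra B] where
  Q : Set B
  B0 : Set B
  B1 : Set B
  P : Set B
  R : B → B → Prop
  hQ : IsCompleteSubalgebra Q
  hB0 : IsCompleteSubalgebra B0
  hB1 : IsCompleteSubalgebra B1
  hQB0 : Q ⊆ B0
  hQB1 : Q ⊆ B1
  hPne : ∀ p ∈ P, p ≠ ⊥
  f : B → B
  finv : B → B
  f_mem : ∀ b ∈ B0, f b ∈ B1
  finv_mem : ∀ b ∈ B1, finv b ∈ B0
  finv_f : ∀ b ∈ B0, finv (f b) = b
  f_finv : ∀ b ∈ B1, f (finv b) = b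
  f_inf : ∀ a ∈ B0, ∀ b ∈ B0, f (a ⊓ b) = f a ⊓ f b
  f_sup : ∀ a ∈ B0, ∀ b ∈ B0, f (a ⊔ b) = f a ⊔ f b
  f_compl : ∀ a ∈ B0, f aᶜ = (f a)ᶜ
  f_fixQ : ∀ q ∈ Q, f q = q
  f_proj : ∀ b ∈ B0, proj Q (f b) = proj Q b
  R_proj_mem : ∀ p ∈ P, proj Q p ∈ P
  R_proj_refl : ∀ p ∈ P, R (proj Q p) (proj Q p)

/-- `F(x) = f(π₀(x))`. -/
def Setting.F (S : Setting B) (x : B) : B := S.f (proj S.B0 x)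

/-- `G(x) = f⁻¹(π₁(x))`. -/
def Setting.G (S : Setting B) (x : B) : B := S.finv (proj S.B1 x)

/-- Membership in the blowup `P̂`. -/
def Setting.InBlowup (S : Setting B) (t : B × B × B) : Prop :=
  t.1 ∈ S.P ∧ t.2.1 ∈ S.B0 ∧ t.2.2 ∈ S.B1 ∧ proj S.Q (bm t) = proj S.Q t.1

/-- Membership in the amalgamation `P^ℤ_f`: each coordinate is in the blowup,
the linking equations hold, and `R(p̄(k)^P, π(p̄(k)^P))` for all but finitely
many `k`. -/
def Setting.InAmalg (S : Setting B) (pb : ℤ → B × B × B) : Prop :=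
  (∀ k : ℤ, S.InBlowup (pb k)) ∧
  (∀ k : ℤ, S.f (proj S.B0 (bm (pb k))) = proj S.B1 (bm (pb (k + 1)))) ∧
  {k : ℤ | ¬ S.R (pb k).1 (proj S.Q (pb k).1)}.Finite

/-- The coordinatewise ordering of the amalgamation. -/
def amLE (pb qb : ℤ → B × B × B) : Prop := ∀ k : ℤ, bLE (pb k) (qb k)

/-- The embedding `e : P̂ → P^ℤ_f`. -/
def Setting.e (S : Setting B) (u : B × B × B) : ℤ → B × B × B := fun i =>
  if i = 0 then u
  else if 0 < i then (proj S.Q u.1, ⊤, (S.F)^[i.toNat] (bm u))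
  else (proj S.Q u.1, (S.G)^[(-i).toNat] (bm u), ⊤)

theorem le_proj (A : Set B) (b : B) : b ≤ proj A b := le_sInf fun _ ha => ha.2

theorem proj_le {A : Set B} {a b : B} (ha : a ∈ A) (h : b ≤ a) : proj A b ≤ a :=
  sInf_le ⟨ha, h⟩

theorem proj_mono (A : Set B) : Monotone (proj A) :=
  fun _ _ h => le_sInf fun _ ha => sInf_le ⟨ha.1, h.trans ha.2⟩

theorem proj_proj {A Q : Set B} (hQA : Q ⊆ A) (b : B) : proj Q (proj A b) = proj Q b :=
  congrArg sInf <| Set.ext fun _ =>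
    and_congr_right fun ha => ⟨(le_proj A b).trans, proj_le (hQA ha)⟩

namespace IsCompleteSubalgebra

variable {A : Set B}

theorem compl_mem (hA : IsCompleteSubalgebra A) {a : B} (ha : a ∈ A) : aᶜ ∈ A := hA.2.1 a ha

theorem bot_mem (hA : IsCompleteSubalgebra A) : ⊥ ∈ A :=
  compl_top (α := B) ▸ hA.compl_mem hA.1

theorem sup_mem (hA : IsCompleteSubalgebra A) {a b : B} (ha : a ∈ A) (hb : b ∈ A) :
    a ⊔ b ∈ A :=
  sSup_pair (a := a) (b := b) ▸ hA.2.2 {a, b} (Set.pair_subset ha hb)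

theorem inf_mem (hA : IsCompleteSubalgebra A) {a b : B} (ha : a ∈ A) (hb : b ∈ A) :
    a ⊓ b ∈ A := by
  simpa using hA.compl_mem (hA.sup_mem (hA.compl_mem ha) (hA.compl_mem hb))

theorem himp_mem (hA : IsCompleteSubalgebra A) {a b : B} (ha : a ∈ A) (hb : b ∈ A) :
    a ⇨ b ∈ A :=
  himp_eq (x := a) ▸ hA.sup_mem hb (hA.compl_mem ha)

theorem sInf_mem (hA : IsCompleteSubalgebra A) {S : Set B} (hS : S ⊆ A) : sInf S ∈ A := by
  have h := hA.compl_mem <| hA.2.2 (compl '' S) <| by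
    rintro _ ⟨a, ha, rfl⟩
    exact hA.compl_mem (hS ha)
  rwa [← compl_sInf', compl_compl] at h

theorem proj_mem (hA : IsCompleteSubalgebra A) (b : B) : proj A b ∈ A :=
  hA.sInf_mem fun _ ha => ha.1

theorem proj_inf_of_mem (hA : IsCompleteSubalgebra A) {a : B} (ha : a ∈ A) (b : B) :
    proj A (a ⊓ b) = a ⊓ proj A b :=
  le_antisymm (le_inf (proj_le ha inf_le_left) (proj_mono A inf_le_right))
    (le_sInf fun _ ⟨hc, hab⟩ =>
      le_himp_iff'.1 (proj_le (hA.himp_mem ha hc) (le_himp_iff'.2 hab)))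

theorem proj_inf_of_le (hA : IsCompleteSubalgebra A) {a b : B} (ha : a ∈ A)
    (h : a ≤ proj A b) : proj A (a ⊓ b) = a := by
  rw [hA.proj_inf_of_mem ha, inf_eq_left.2 h]

end IsCompleteSubalgebra

def iterateFrom {α : Type*} (step : ℤ → α → α) (i : ℤ) (x : α) : ℕ → α
  | 0 => x
  | n + 1 => step (i + n + 1) (iterateFrom step i x n)

/-- Below `i` the sequence is built by iterating upwards in the reflected index `-k`. -/
def zigzag {α : Type*} (up down : ℤ → α → α) (i : ℤ) (x : α) (k : ℤ) : α :=
  if i ≤ k then iterateFrom up i x (k - i).toNat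
  else iterateFrom (fun j => down (-j)) (-i) x (i - k).toNat

section Zigzag

variable {α : Type*} {up down : ℤ → α → α} {i k : ℤ} {x : α}

@[simp]
theorem zigzag_self : zigzag up down i x i = x := by simp [zigzag, iterateFrom]

theorem zigzag_of_lt (hik : i < k) :
    zigzag up down i x k = up k (zigzag up down i x (k - 1)) := by
  rw [zigzag, if_pos hik.le, show (k - i).toNat = (k - 1 - i).toNat + 1 by omega, iterateFrom,
    zigzag, if_pos (by omega)]
  congr 1
  omega

theorem zigzag_of_gt (hki : k < i) :
    zigzag up down i x k = down k (zigzag up down i x (k + 1)) := by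
  rw [zigzag, if_neg (by omega), show (i - k).toNat = (i - (k + 1)).toNat + 1 by omega,
    iterateFrom]
  rcases (show k + 1 ≤ i by omega).eq_or_lt with h | h
  · subst h; simp [iterateFrom]
  · rw [zigzag, if_neg (by omega)]
    congr 1
    omega

end Zigzag

namespace Setting

variable (S : Setting B)

theorem f_injOn : Set.InjOn S.f S.B0 := fun a ha b hb h => by
  rw [← S.finv_f a ha, h, S.finv_f b hb]

theorem f_le_f_iff {a b : B} (ha : a ∈ S.B0) (hb : b ∈ S.B0) : S.f a ≤ S.f b ↔ a ≤ b := by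
  rw [← inf_eq_left, ← S.f_inf a ha b hb, S.f_injOn.eq_iff (S.hB0.inf_mem ha hb) ha, inf_eq_left]

theorem finv_mono {a b : B} (ha : a ∈ S.B1) (hb : b ∈ S.B1) (h : a ≤ b) :
    S.finv a ≤ S.finv b := by
  rwa [← S.f_le_f_iff (S.finv_mem a ha) (S.finv_mem b hb), S.f_finv a ha, S.f_finv b hb]

theorem F_mem (x : B) : S.F x ∈ S.B1 := S.f_mem _ (S.hB0.proj_mem x)

theorem G_mem (x : B) : S.G x ∈ S.B0 := S.finv_mem _ (S.hB1.proj_mem x)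

def Linked (m : ℤ → B) : Prop := ∀ k, S.f (proj S.B0 (m k)) = proj S.B1 (m (k + 1))

variable {S}

theorem Linked.proj_eq {m : ℤ → B} (hm : S.Linked m) (k l : ℤ) :
    proj S.Q (m k) = proj S.Q (m l) := by
  have hper : Function.Periodic (fun k => proj S.Q (m k)) 1 := fun k => by
    dsimp only
    rw [← proj_proj S.hQB1, ← hm k, S.f_proj _ (S.hB0.proj_mem _), proj_proj S.hQB0]
  have h := fun n : ℤ => hper.int_mul n 0
  simpa using (h k).trans (h l).symm

theorem F_le_proj_of_link {a b x : B} (hab : S.f (proj S.B0 a) = proj S.B1 b) (hx : x ≤ a) :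
    S.F x ≤ proj S.B1 b :=
  hab ▸ (S.f_le_f_iff (S.hB0.proj_mem x) (S.hB0.proj_mem a)).2 (proj_mono _ hx)

theorem G_le_proj_of_link {a b y : B} (hab : S.f (proj S.B0 a) = proj S.B1 b) (hy : y ≤ b) :
    S.G y ≤ proj S.B0 a := by
  rw [G, ← S.finv_f _ (S.hB0.proj_mem a), hab]
  exact S.finv_mono (S.hB1.proj_mem y) (S.hB1.proj_mem b) (proj_mono _ hy)

theorem link_F_inf {a b x : B} (hab : S.f (proj S.B0 a) = proj S.B1 b) (hx : x ≤ a) :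
    S.f (proj S.B0 x) = proj S.B1 (S.F x ⊓ b) :=
  (S.hB1.proj_inf_of_le (S.F_mem x) (F_le_proj_of_link hab hx)).symm

theorem link_G_inf {a b y : B} (hab : S.f (proj S.B0 a) = proj S.B1 b) (hy : y ≤ b) :
    S.f (proj S.B0 (S.G y ⊓ a)) = proj S.B1 y := by
  rw [S.hB0.proj_inf_of_le (S.G_mem y) (G_le_proj_of_link hab hy), G,
    S.f_finv _ (S.hB1.proj_mem y)]

theorem InBlowup.bm_ne_bot {t : B × B × B} (ht : S.InBlowup t) : bm t ≠ ⊥ := fun h =>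
  S.hPne _ ht.1 <| le_bot_iff.1 <| calc
    t.1 ≤ proj S.Q t.1 := le_proj _ _
    _ = proj S.Q ⊥ := by rw [← ht.2.2.2, h]
    _ ≤ ⊥ := proj_le S.hQ.bot_mem le_rfl

def meetSeq (S : Setting B) (pb : ℤ → B × B × B) (i : ℤ) (p : B) : ℤ → B :=
  zigzag (fun k x => S.F x ⊓ bm (pb k)) (fun k x => S.G x ⊓ bm (pb k)) i p

def extension (S : Setting B) (pb : ℤ → B × B × B) (i : ℤ) (p : B) : ℤ → B × B × B := fun k =>
  if k = i then (p, ⊤, ⊤)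
  else if i < k then
    (proj S.Q p ⊓ (pb k).1, (pb k).2.1, S.F (S.meetSeq pb i p (k - 1)) ⊓ (pb k).2.2)
  else (proj S.Q p ⊓ (pb k).1, S.G (S.meetSeq pb i p (k + 1)) ⊓ (pb k).2.1, (pb k).2.2)

variable {pb : ℤ → B × B × B} {i : ℤ} {p : B}

theorem meetSeq_of_lt {k : ℤ} (hik : i < k) :
    S.meetSeq pb i p k = S.F (S.meetSeq pb i p (k - 1)) ⊓ bm (pb k) :=
  zigzag_of_lt hik

theorem meetSeq_of_gt {k : ℤ} (hki : k < i) :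
    S.meetSeq pb i p k = S.G (S.meetSeq pb i p (k + 1)) ⊓ bm (pb k) :=
  zigzag_of_gt hki

theorem meetSeq_le (hp : p ≤ bm (pb i)) (k : ℤ) : S.meetSeq pb i p k ≤ bm (pb k) := by
  rcases lt_trichotomy k i with hki | rfl | hik
  · exact (meetSeq_of_gt hki).trans_le inf_le_right
  · simpa [meetSeq] using hp
  · exact (meetSeq_of_lt hik).trans_le inf_le_right

theorem meetSeq_linked (hpb : S.Linked fun k => bm (pb k)) (hp : p ≤ bm (pb i)) :
    S.Linked (S.meetSeq pb i p) := fun k => by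
  rcases le_or_gt i k with hik | hki
  · rw [meetSeq_of_lt (k := k + 1) (by omega), add_sub_cancel_right]
    exact link_F_inf (hpb k) (meetSeq_le hp k)
  · rw [meetSeq_of_gt hki]
    exact link_G_inf (hpb k) (meetSeq_le hp (k + 1))

theorem proj_meetSeq (hpb : S.Linked fun k => bm (pb k)) (hp : p ≤ bm (pb i)) (k : ℤ) :
    proj S.Q (S.meetSeq pb i p k) = proj S.Q p := by
  simpa [meetSeq] using (meetSeq_linked hpb hp).proj_eq k i

theorem bm_extension (hpb : S.Linked fun k => bm (pb k)) (hp : p ≤ bm (pb i)) (k : ℤ) :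
    bm (S.extension pb i p k) = S.meetSeq pb i p k := by
  have hq : S.meetSeq pb i p k ≤ proj S.Q p := proj_meetSeq hpb hp k ▸ le_proj _ _
  rcases lt_trichotomy k i with hki | rfl | hik
  · rw [meetSeq_of_gt hki] at hq ⊢
    rw [← inf_eq_right.2 hq]
    simp only [extension, bm, hki.ne, hki.not_gt, if_false]
    ac_rfl
  · simp [extension, bm, meetSeq]
  · rw [meetSeq_of_lt hik] at hq ⊢
    rw [← inf_eq_right.2 hq]
    simp only [extension, bm, hik.ne', hik, if_false, if_true]
    ac_rfl

theorem extension_fst {k : ℤ} (hki : k ≠ i) :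
    (S.extension pb i p k).1 = proj S.Q p ⊓ (pb k).1 := by
  simp only [extension, hki, if_false]
  split_ifs <;> rfl

theorem extension_le (hpb : S.Linked fun k => bm (pb k)) (hp : p ≤ bm (pb i)) :
    amLE (S.extension pb i p) pb := fun k => by
  refine ⟨?_, (bm_extension hpb hp k).trans_le (meetSeq_le hp k)⟩
  by_cases hki : k = i
  · subst hki
    simpa [extension] using hp.trans (inf_le_left.trans inf_le_left)
  · exact (extension_fst hki).trans_le inf_le_right

theorem proj_le_proj_fst (hpb : S.InAmalg pb) (hp : p ≤ bm (pb i)) (k : ℤ) :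
    proj S.Q p ≤ proj S.Q (pb k).1 := by
  rw [← (hpb.1 k).2.2.2, Linked.proj_eq hpb.2.1 k i]
  exact proj_mono _ hp

theorem proj_extension_fst (hpb : S.InAmalg pb) (hp : p ≤ bm (pb i)) {k : ℤ} (hki : k ≠ i) :
    proj S.Q (S.extension pb i p k).1 = proj S.Q p := by
  rw [extension_fst hki, S.hQ.proj_inf_of_le (S.hQ.proj_mem p) (proj_le_proj_fst hpb hp k)]

theorem extension_inBlowup
    (h_meet : ∀ p ∈ S.P, ∀ q ∈ S.Q, q ≠ ⊥ → q ≤ proj S.Q p → q ⊓ p ∈ S.P)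
    (hpb : S.InAmalg pb) (hpP : p ∈ S.P) (hp : p ≤ bm (pb i)) (k : ℤ) :
    S.InBlowup (S.extension pb i p k) := by
  by_cases hki : k = i
  · subst hki
    simpa [InBlowup, extension, bm] using ⟨hpP, S.hB0.1, S.hB1.1⟩
  have hq : proj S.Q p ≠ ⊥ := ne_bot_of_le_ne_bot (S.hPne p hpP) (le_proj _ _)
  refine ⟨?_, ?_, ?_, ?_⟩
  · rw [extension_fst hki]
    exact h_meet _ (hpb.1 k).1 _ (S.hQ.proj_mem p) hq (proj_le_proj_fst hpb hp k)
  · simp only [extension, hki, if_false]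
    split_ifs
    exacts [(hpb.1 k).2.1, S.hB0.inf_mem (S.G_mem _) (hpb.1 k).2.1]
  · simp only [extension, hki, if_false]
    split_ifs
    exacts [S.hB1.inf_mem (S.F_mem _) (hpb.1 k).2.2.1, (hpb.1 k).2.2.1]
  · rw [bm_extension hpb.2.1 hp, proj_meetSeq hpb.2.1 hp, proj_extension_fst hpb hp hki]

theorem extension_inAmalg
    (h_meet : ∀ p ∈ S.P, ∀ q ∈ S.Q, q ≠ ⊥ → q ≤ proj S.Q p → q ⊓ p ∈ S.P)
    (h_Rmeet : ∀ p ∈ S.P, ∀ q, q ∈ S.Q → q ∈ S.P → q ≠ ⊥ → q ≤ proj S.Q p →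
      S.R p (proj S.Q p) → S.R (q ⊓ p) q)
    (hpb : S.InAmalg pb) (hpP : p ∈ S.P) (hp : p ≤ bm (pb i)) :
    S.InAmalg (S.extension pb i p) := by
  refine ⟨extension_inBlowup h_meet hpb hpP hp, fun k => ?_, ?_⟩
  · rw [bm_extension hpb.2.1 hp, bm_extension hpb.2.1 hp]
    exact meetSeq_linked hpb.2.1 hp k
  · refine (hpb.2.2.insert i).subset fun k hk => ?_
    by_cases hki : k = i
    · exact Or.inl hki
    · refine Or.inr fun hR => hk ?_
      rw [proj_extension_fst hpb hp hki, extension_fst hki]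
      exact h_Rmeet _ (hpb.1 k).1 _ (S.hQ.proj_mem p) (S.R_proj_mem p hpP)
        (ne_bot_of_le_ne_bot (S.hPne p hpP) (le_proj _ _)) (proj_le_proj_fst hpb hp k) hR

end Setting

/-- from Corollary 4.3: if `P` is dense in `B` and `P`, `R` are
suitably closed under meets with elements of `Q`, then for every `i ∈ ℤ` the
set `R_i = {p̄ ∈ P^ℤ_f : p̄(i) = (p̄(i)^P, ⊤, ⊤)}` is dense in `P^ℤ_f`. -/
theorem Ri_dense (S : Setting B)
    (hPdense : ∀ b : B, b ≠ ⊥ → ∃ p ∈ S.P, p ≤ b)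
    (h_meet : ∀ p ∈ S.P, ∀ q ∈ S.Q, q ≠ ⊥ → q ≤ proj S.Q p → q ⊓ p ∈ S.P)
    (h_Rmeet : ∀ p ∈ S.P, ∀ q, q ∈ S.Q → q ∈ S.P → q ≠ ⊥ → q ≤ proj S.Q p →
      S.R p (proj S.Q p) → S.R (q ⊓ p) q)
    (i : ℤ) (pb : ℤ → B × B × B) (hpb : S.InAmalg pb) :
    ∃ qb : ℤ → B × B × B, S.InAmalg qb ∧ amLE qb pb ∧
      (qb i).2.1 = ⊤ ∧ (qb i).2.2 = ⊤ := by
  obtain ⟨p, hpP, hp⟩ := hPdense _ (hpb.1 i).bm_ne_bot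
  exact ⟨S.extension pb i p, Setting.extension_inAmalg h_meet h_Rmeet hpb hpP hp,
    Setting.extension_le hpb.2.1 hp, by simp [Setting.extension], by simp [Setting.extension]⟩

end Stmt9
end

section
/- (The equivalence of the two formulations of the set D̄ of the paper's Definition 5.3.) Let B be a complete Boolean algebra with complete subalgebras Q, B₀, B₁ such that Q ⊆ B₀ ∩ B₁, and write π = π_Q, π₀ = π_{B₀}, π₁ = π_{B₁}. Let p, q ∈ B with q ≤ p. Then the following are equivalent: (a) for all b₀ ∈ B₀ and b₁ ∈ B₁, if π(q) ⊓ p ⊓ b₀ ⊓ b₁ ≠ ⊥ then q ⊓ b₀ ⊓ b₁ ≠ ⊥; (b) π₁(q ⊓ b) = π(q) ⊓ π₁(p ⊓ b) for all b ∈ B₀, and π₀(q ⊓ b) = π(q) ⊓ π₀(p ⊓ b) for all b ∈ B₁. -/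
/-
STATEMENT 13: equivalence of the two formulations of the freezing condition
(definition of D̄, Definition 5.3 of the paper).
-/

namespace Stmt13

variable {B : Type*} [CompleteBooleanAlgebra B]

/-- `A` is a complete subalgebra of the complete Boolean algebra `B`. -/
def IsCompleteSubalgebra (A : Set B) : Prop :=
  ⊤ ∈ A ∧ (∀ a ∈ A, aᶜ ∈ A) ∧ ∀ S ⊆ A, sSup S ∈ A

/-- The canonical projection onto `A`. -/
def proj (A : Set B) (b : B) : B := sInf {a | a ∈ A ∧ b ≤ a}


lemma sInf_mem' {A : Set B} (hA : IsCompleteSubalgebra A) {S : Set B} (hS : S ⊆ A) :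
    sInf S ∈ A := by
  have h1 : sSup (compl '' S) ∈ A := by
    apply hA.2.2
    rintro x ⟨y, hy, rfl⟩
    exact hA.2.1 y (hS hy)
  have h2 : (sSup (compl '' S))ᶜ = sInf S := by
    rw [compl_sSup']
    congr 1
    ext x
    simp only [Set.mem_image]
    constructor
    · rintro ⟨y, ⟨z, hz, rfl⟩, rfl⟩; simpa using hz
    · intro hx; exact ⟨xᶜ, ⟨x, hx, rfl⟩, compl_compl x⟩
  rw [← h2]
  exact hA.2.1 _ h1

lemma inf_mem' {A : Set B} (hA : IsCompleteSubalgebra A) {a b : B}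
    (ha : a ∈ A) (hb : b ∈ A) : a ⊓ b ∈ A := by
  have : a ⊓ b = sInf {a, b} := by simp
  rw [this]
  exact sInf_mem' hA (by rintro x (rfl | rfl) <;> assumption)

lemma le_proj {A : Set B} (b : B) : b ≤ proj A b :=
  le_sInf fun a ha => ha.2

lemma proj_mem {A : Set B} (hA : IsCompleteSubalgebra A) (b : B) : proj A b ∈ A :=
  sInf_mem' hA fun a ha => ha.1

lemma proj_le {A : Set B} {a b : B} (ha : a ∈ A) (hba : b ≤ a) : proj A b ≤ a :=
  sInf_le ⟨ha, hba⟩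

lemma proj_mono {A : Set B} {b c : B} (h : b ≤ c) : proj A b ≤ proj A c :=
  le_sInf fun a ha => sInf_le ⟨ha.1, h.trans ha.2⟩

/-- key compatibility lemma -/
lemma inf_proj_ne_bot {A : Set B} (hA : IsCompleteSubalgebra A) {a b : B} (ha : a ∈ A) :
    a ⊓ proj A b ≠ ⊥ ↔ a ⊓ b ≠ ⊥ := by
  constructor
  · intro h hab
    apply h
    have : b ≤ aᶜ := le_compl_iff_disjoint_left.mpr (disjoint_iff.mpr hab)
    have := proj_le (hA.2.1 a ha) this
    exact disjoint_iff.mp (le_compl_iff_disjoint_left.mp this)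
  · intro h hab
    exact h (le_bot_iff.mp ((inf_le_inf_left a (le_proj b)).trans hab.le))

lemma le_of_compat {A : Set B} (hA : IsCompleteSubalgebra A) {x y : B} (hy : y ∈ A)
    (h : ∀ a ∈ A, a ⊓ x ≠ ⊥ → a ⊓ y ≠ ⊥) : x ≤ y := by
  by_contra hxy
  have h1 : yᶜ ⊓ x ≠ ⊥ := by
    intro hb
    have : x ≤ yᶜᶜ := le_compl_iff_disjoint_left.mpr (disjoint_iff.mpr hb)
    exact hxy (by simpa using this)
  exact h yᶜ (hA.2.1 y hy) h1 (by simp)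

lemma aux_forward {Q B0 B1 : Set B}
    (hQ : IsCompleteSubalgebra Q) (hB1 : IsCompleteSubalgebra B1)
    (hQB1 : Q ⊆ B1) {p q : B} (hqp : q ≤ p)
    (H : ∀ b0 ∈ B0, ∀ b1 ∈ B1, proj Q q ⊓ p ⊓ b0 ⊓ b1 ≠ ⊥ → q ⊓ b0 ⊓ b1 ≠ ⊥) :
    ∀ b ∈ B0, proj B1 (q ⊓ b) = proj Q q ⊓ proj B1 (p ⊓ b) := by
  intro b hb
  apply le_antisymm
  · exact le_inf (proj_le (hQB1 (proj_mem hQ q)) (inf_le_left.trans (le_proj q)))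
      (proj_mono (inf_le_inf_right b hqp))
  · apply le_of_compat hB1 (proj_mem hB1 _)
    intro a ha hne
    have haq : a ⊓ proj Q q ∈ B1 := inf_mem' hB1 ha (hQB1 (proj_mem hQ q))
    have h2 : (a ⊓ proj Q q) ⊓ (p ⊓ b) ≠ ⊥ := by
      rw [← inf_proj_ne_bot hB1 haq]
      intro h
      apply hne
      rw [← h]
      ac_rfl
    have h3 : proj Q q ⊓ p ⊓ b ⊓ a ≠ ⊥ := by
      intro h; apply h2; rw [← h]; ac_rfl
    have h4 := H b hb a ha h3
    rw [inf_proj_ne_bot hB1 ha]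
    intro h; apply h4; rw [← h]; ac_rfl

theorem freezing_characterization (Q B0 B1 : Set B)
    (hQ : IsCompleteSubalgebra Q) (hB0 : IsCompleteSubalgebra B0)
    (hB1 : IsCompleteSubalgebra B1)
    (hQB0 : Q ⊆ B0) (hQB1 : Q ⊆ B1)
    (p q : B) (hqp : q ≤ p) :
    (∀ b0 ∈ B0, ∀ b1 ∈ B1, proj Q q ⊓ p ⊓ b0 ⊓ b1 ≠ ⊥ → q ⊓ b0 ⊓ b1 ≠ ⊥) ↔
      ((∀ b ∈ B0, proj B1 (q ⊓ b) = proj Q q ⊓ proj B1 (p ⊓ b)) ∧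
       (∀ b ∈ B1, proj B0 (q ⊓ b) = proj Q q ⊓ proj B0 (p ⊓ b))) := by
  constructor
  · intro H
    refine ⟨aux_forward hQ hB1 hQB1 hqp H, aux_forward hQ hB0 hQB0 hqp ?_⟩
    intro b1 hb1 b0 hb0 hne
    have h1 : proj Q q ⊓ p ⊓ b0 ⊓ b1 ≠ ⊥ := by
      intro h; apply hne; rw [← h]; ac_rfl
    have h2 := H b0 hb0 b1 hb1 h1
    intro h; apply h2; rw [← h]; ac_rfl
  · rintro ⟨H0, _⟩ b0 hb0 b1 hb1 hne
    have hq1 : proj Q q ⊓ b1 ∈ B1 := inf_mem' hB1 (hQB1 (proj_mem hQ q)) hb1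
    have h1 : (proj Q q ⊓ b1) ⊓ (p ⊓ b0) ≠ ⊥ := by
      intro h; apply hne; rw [← h]; ac_rfl
    have h2 : (proj Q q ⊓ b1) ⊓ proj B1 (p ⊓ b0) ≠ ⊥ := by
      rw [inf_proj_ne_bot hB1 hq1]; exact h1
    have h3 : b1 ⊓ proj B1 (q ⊓ b0) ≠ ⊥ := by
      rw [H0 b0 hb0]
      intro h; apply h2; rw [← h]; ac_rfl
    have h4 : b1 ⊓ (q ⊓ b0) ≠ ⊥ := (inf_proj_ne_bot hB1 hb1).mp h3
    intro h; apply h4; rw [← h]; ac_rfl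


end Stmt13
end

section
/- (The paper's Lemma 5.6.) Let R be a transitive binary relation on P with R(p,q) implying p ≤ q, and suppose the pair B₀, B₁ is reduced over Q with respect to R, i.e. for every p ∈ P such that R(p,q) holds for some q ∈ Q ∩ P, one has π₁(p ⊓ b) = π(p) ⊓ π(b) for all b ∈ B₀ and π₀(p ⊓ b) = π(p) ⊓ π(b) for all b ∈ B₁. Then every p ∈ P such that R(p,q) holds for some q ∈ Q ∩ P is frozen. In particular, if R is reflexive, then every element of Q ∩ P is frozen. -/
/-
STATEMENT 15 (Lemma 5.6): if the pair B₀, B₁ is reduced over Q with respect to R,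
then every p ∈ P with R(p,q) for some q ∈ Q ∩ P is frozen; in particular, if R is
reflexive, every element of Q ∩ P is frozen.
-/

namespace Stmt15

variable {B : Type*} [CompleteBooleanAlgebra B]

/-- `A` is a complete subalgebra of the complete Boolean algebra `B`. -/
def IsCompleteSubalgebra (A : Set B) : Prop :=
  ⊤ ∈ A ∧ (∀ a ∈ A, aᶜ ∈ A) ∧ ∀ S ⊆ A, sSup S ∈ A

/-- The canonical projection onto `A`. -/
def proj (A : Set B) (b : B) : B := sInf {a | a ∈ A ∧ b ≤ a}

/-- `p` is frozen (i.e. `p ∈ D̄(Q,P,f,λ₀)`): for every `q ∈ P` with `R(q,p)`,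
`π₁(q ⊓ b) = π(q) ⊓ π₁(p ⊓ b)` for all `b ∈ B₀` and
`π₀(q ⊓ b) = π(q) ⊓ π₀(p ⊓ b)` for all `b ∈ B₁`. -/
def Frozen (Q B0 B1 P : Set B) (R : B → B → Prop) (p : B) : Prop :=
  ∀ q ∈ P, R q p →
    (∀ b ∈ B0, proj B1 (q ⊓ b) = proj Q q ⊓ proj B1 (p ⊓ b)) ∧
    (∀ b ∈ B1, proj B0 (q ⊓ b) = proj Q q ⊓ proj B0 (p ⊓ b))

theorem reduced_pair_frozen (Q B0 B1 P : Set B)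
    (hQ : IsCompleteSubalgebra Q) (hB0 : IsCompleteSubalgebra B0)
    (hB1 : IsCompleteSubalgebra B1)
    (hQB0 : Q ⊆ B0) (hQB1 : Q ⊆ B1)
    (hPne : ∀ p ∈ P, p ≠ ⊥)
    (R : B → B → Prop)
    (hRtrans : ∀ a b c : B, R a b → R b c → R a c)
    (hRle : ∀ a b : B, R a b → a ≤ b)
    -- the pair B₀, B₁ is reduced over Q with respect to R:
    (hreduced : ∀ p ∈ P, (∃ q, q ∈ Q ∧ q ∈ P ∧ R p q) →
      (∀ b ∈ B0, proj B1 (p ⊓ b) = proj Q p ⊓ proj Q b) ∧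
      (∀ b ∈ B1, proj B0 (p ⊓ b) = proj Q p ⊓ proj Q b)) :
    (∀ p ∈ P, (∃ q, q ∈ Q ∧ q ∈ P ∧ R p q) → Frozen Q B0 B1 P R p) ∧
    ((∀ a : B, R a a) → ∀ q, q ∈ Q → q ∈ P → Frozen Q B0 B1 P R q) := by
  have proj_mono : ∀ (A : Set B) (x y : B), x ≤ y → proj A x ≤ proj A y := by
    intro A x y hxy
    exact sInf_le_sInf (fun a ha => ⟨ha.1, hxy.trans ha.2⟩)
  have main : ∀ p ∈ P, (∃ q, q ∈ Q ∧ q ∈ P ∧ R p q) → Frozen Q B0 B1 P R p := by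
    intro p hp ⟨q0, hq0Q, hq0P, hRpq0⟩ q hqP hRqp
    have hq : ∃ q', q' ∈ Q ∧ q' ∈ P ∧ R q q' := ⟨q0, hq0Q, hq0P, hRtrans _ _ _ hRqp hRpq0⟩
    have hpred := hreduced p hp ⟨q0, hq0Q, hq0P, hRpq0⟩
    have hqred := hreduced q hqP hq
    have hmono : proj Q q ⊓ proj Q p = proj Q q :=
      inf_eq_left.mpr (proj_mono Q q p (hRle _ _ hRqp))
    constructor
    · intro b hb
      rw [hqred.1 b hb, hpred.1 b hb, ← inf_assoc, hmono]
    · intro b hb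
      rw [hqred.2 b hb, hpred.2 b hb, ← inf_assoc, hmono]
  exact ⟨main, fun hrefl q hqQ hqP => main q hqP ⟨q, hqQ, hqP, hrefl q⟩⟩

end Stmt15
end

section
/- (The paper's Lemma 5.7: Q · D̄ ⊆ D̄, via the stable meet operator.) Let R be a binary relation on P with R(p,q) implying p ≤ q and such that p ≤ q ≤ r together with R(p,r) implies R(p,q). Assume: (i) q ⊓ p ∈ P whenever p ∈ P, q ∈ Q and ⊥ ≠ q ≤ π(p); (ii) stable meets exist, i.e. whenever p, r ∈ P with r ≤ p and R(r, π(r) ⊓ p), there is s ∈ P with R(s,p), π(s) = π(p), and π(r) ⊓ s = r. Then: (1) if p ∈ P is frozen and s ∈ P satisfies R(s,p) and π(s) = π(p), then π₁(s ⊓ b) = π₁(p ⊓ b) for all b ∈ B₀ and π₀(s ⊓ b) = π₀(p ⊓ b) for all b ∈ B₁; (2) if p ∈ P is frozen, q ∈ Q and ⊥ ≠ q ≤ π(p), then q ⊓ p is frozen. -/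
/-!
If `p` is frozen and `R(s,p)`, then `πᵢ(s ⊓ b) = π(s) ⊓ πᵢ(p ⊓ b)`, and the factor `π(s)` is
harmless once `π(s) = π(p)`, because `πᵢ(p ⊓ b) ≤ π(p)`. For `R(r, q ⊓ p)`, the relation passes
down to `R(r, π(r) ⊓ p)`, so a stable meet `s` of `r` and `p` exists: `R(s,p)`, `π(s) = π(p)` and
`r = π(r) ⊓ s`. Since `π(r) ∈ Q ⊆ Bᵢ` and projections commute with meets by elements of the
subalgebra, `πᵢ(r ⊓ b) = π(r) ⊓ πᵢ(s ⊓ b) = π(r) ⊓ πᵢ(p ⊓ b) = π(r) ⊓ πᵢ(q ⊓ p ⊓ b)`,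
the last step because `π(r) ≤ q`.
-/

namespace Stmt16

variable {B : Type*} [CompleteBooleanAlgebra B]

/-- `A` is a complete subalgebra of the complete Boolean algebra `B`. -/
def IsCompleteSubalgebra (A : Set B) : Prop :=
  ⊤ ∈ A ∧ (∀ a ∈ A, aᶜ ∈ A) ∧ ∀ S ⊆ A, sSup S ∈ A

/-- The canonical projection onto `A`. -/
def proj (A : Set B) (b : B) : B := sInf {a | a ∈ A ∧ b ≤ a}

/-- `p` is frozen (i.e. `p ∈ D̄(Q,P,f,λ₀)`): for every `q ∈ P` with `R(q,p)`,
`π₁(q ⊓ b) = π(q) ⊓ π₁(p ⊓ b)` for all `b ∈ B₀` and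
`π₀(q ⊓ b) = π(q) ⊓ π₀(p ⊓ b)` for all `b ∈ B₁`. -/
def Frozen (Q B0 B1 P : Set B) (R : B → B → Prop) (p : B) : Prop :=
  ∀ q ∈ P, R q p →
    (∀ b ∈ B0, proj B1 (q ⊓ b) = proj Q q ⊓ proj B1 (p ⊓ b)) ∧
    (∀ b ∈ B1, proj B0 (q ⊓ b) = proj Q q ⊓ proj B0 (p ⊓ b))

namespace IsCompleteSubalgebra

variable {A : Set B} (hA : IsCompleteSubalgebra A)
include hA

theorem compl_mem {a : B} (ha : a ∈ A) : aᶜ ∈ A := hA.2.1 a ha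

theorem sSup_mem {S : Set B} (hS : S ⊆ A) : sSup S ∈ A := hA.2.2 S hS

theorem sInf_mem {S : Set B} (hS : S ⊆ A) : sInf S ∈ A := by
  rw [← compl_compl (sInf S), compl_sInf']
  exact hA.compl_mem (hA.sSup_mem (Set.image_subset_iff.2 fun _ hx => hA.compl_mem (hS hx)))

theorem sup_mem {a c : B} (ha : a ∈ A) (hc : c ∈ A) : a ⊔ c ∈ A := by
  simpa only [sSup_pair] using hA.sSup_mem (Set.pair_subset ha hc)

theorem himp_mem {a c : B} (ha : a ∈ A) (hc : c ∈ A) : a ⇨ c ∈ A := by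
  simpa only [himp_eq] using hA.sup_mem hc (hA.compl_mem ha)

end IsCompleteSubalgebra

section Projection

variable {A C : Set B}

theorem proj_mem (hA : IsCompleteSubalgebra A) (b : B) : proj A b ∈ A :=
  hA.sInf_mem fun _ hx => hx.1

theorem le_proj (A : Set B) (b : B) : b ≤ proj A b :=
  le_sInf fun _ hx => hx.2

theorem proj_le {a b : B} (ha : a ∈ A) (h : b ≤ a) : proj A b ≤ a :=
  sInf_le ⟨ha, h⟩

theorem proj_mono (A : Set B) {b c : B} (h : b ≤ c) : proj A b ≤ proj A c :=
  le_sInf fun _ hx => sInf_le ⟨hx.1, h.trans hx.2⟩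

theorem proj_le_proj_of_subset (hA : IsCompleteSubalgebra A) (hAC : A ⊆ C) {b c : B}
    (h : b ≤ c) : proj C b ≤ proj A c :=
  proj_le (hAC (proj_mem hA c)) (h.trans (le_proj A c))

theorem proj_inf_of_mem (hA : IsCompleteSubalgebra A) {a : B} (ha : a ∈ A) (x : B) :
    proj A (a ⊓ x) = a ⊓ proj A x := by
  refine le_antisymm (le_inf (proj_le ha inf_le_left) (proj_mono A inf_le_right)) ?_
  have hx : proj A x ≤ a ⇨ proj A (a ⊓ x) :=
    proj_le (hA.himp_mem ha (proj_mem hA _)) (le_himp_iff'.2 (le_proj A _))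
  exact (inf_le_inf_left a hx).trans inf_himp_le

end Projection

section Frozen

variable {Q C : Set B}

theorem proj_inf_eq_of_proj_eq (hQ : IsCompleteSubalgebra Q) (hQC : Q ⊆ C) {p s b : B}
    (hfrozen : proj C (s ⊓ b) = proj Q s ⊓ proj C (p ⊓ b)) (hsp : proj Q s = proj Q p) :
    proj C (s ⊓ b) = proj C (p ⊓ b) := by
  rw [hfrozen, hsp, inf_eq_right.2 (proj_le_proj_of_subset hQ hQC inf_le_left)]

theorem proj_inf_eq_of_stable_meet (hC : IsCompleteSubalgebra C) (hQ : IsCompleteSubalgebra Q)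
    (hQC : Q ⊆ C) {p q r s b : B} (hq : q ∈ Q) (hrq : proj Q r ≤ q)
    (hrs : proj Q r ⊓ s = r) (hsp : proj C (s ⊓ b) = proj C (p ⊓ b)) :
    proj C (r ⊓ b) = proj Q r ⊓ proj C (q ⊓ p ⊓ b) := by
  have hrb : r ⊓ b = proj Q r ⊓ (s ⊓ b) := by rw [← inf_assoc, hrs]
  rw [hrb, proj_inf_of_mem hC (hQC (proj_mem hQ r)), hsp, inf_assoc q,
    proj_inf_of_mem hC (hQC hq), ← inf_assoc, inf_eq_left.2 hrq]

variable {B0 B1 P : Set B} {R : B → B → Prop}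

theorem Frozen.proj_inf_eq (hQ : IsCompleteSubalgebra Q) (hQB0 : Q ⊆ B0) (hQB1 : Q ⊆ B1)
    {p s : B} (hp : Frozen Q B0 B1 P R p) (hs : s ∈ P) (hRsp : R s p)
    (hsp : proj Q s = proj Q p) :
    (∀ b ∈ B0, proj B1 (s ⊓ b) = proj B1 (p ⊓ b)) ∧
      (∀ b ∈ B1, proj B0 (s ⊓ b) = proj B0 (p ⊓ b)) :=
  ⟨fun b hb => proj_inf_eq_of_proj_eq hQ hQB1 ((hp s hs hRsp).1 b hb) hsp,
    fun b hb => proj_inf_eq_of_proj_eq hQ hQB0 ((hp s hs hRsp).2 b hb) hsp⟩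

theorem Frozen.inf_of_mem (hQ : IsCompleteSubalgebra Q) (hB0 : IsCompleteSubalgebra B0)
    (hB1 : IsCompleteSubalgebra B1) (hQB0 : Q ⊆ B0) (hQB1 : Q ⊆ B1)
    (hRle : ∀ a b : B, R a b → a ≤ b)
    (hRer : ∀ a b c : B, a ≤ b → b ≤ c → R a c → R a b)
    (h_stm : ∀ p ∈ P, ∀ r ∈ P, r ≤ p → R r (proj Q r ⊓ p) →
      ∃ s ∈ P, R s p ∧ proj Q s = proj Q p ∧ proj Q r ⊓ s = r)
    {p q : B} (hp : Frozen Q B0 B1 P R p) (hpP : p ∈ P) (hq : q ∈ Q) :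
    Frozen Q B0 B1 P R (q ⊓ p) := by
  intro r hr hRr
  have hrqp : r ≤ q ⊓ p := hRle _ _ hRr
  have hrq : proj Q r ≤ q := proj_le hq (hrqp.trans inf_le_left)
  have hRr' : R r (proj Q r ⊓ p) :=
    hRer _ _ _ (le_inf (le_proj Q r) (hrqp.trans inf_le_right)) (inf_le_inf_right p hrq) hRr
  obtain ⟨s, hs, hRsp, hsp, hrs⟩ := h_stm p hpP r hr (hrqp.trans inf_le_right) hRr'
  obtain ⟨hs1, hs0⟩ := hp.proj_inf_eq hQ hQB0 hQB1 hs hRsp hsp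
  exact ⟨fun b hb => proj_inf_eq_of_stable_meet hB1 hQ hQB1 hq hrq hrs (hs1 b hb),
    fun b hb => proj_inf_eq_of_stable_meet hB0 hQ hQB0 hq hrq hrs (hs0 b hb)⟩

end Frozen

theorem Q_meet_frozen_general (Q B0 B1 P : Set B)
    (hQ : IsCompleteSubalgebra Q) (hB0 : IsCompleteSubalgebra B0)
    (hB1 : IsCompleteSubalgebra B1)
    (hQB0 : Q ⊆ B0) (hQB1 : Q ⊆ B1)
    (R : B → B → Prop)
    (hRle : ∀ a b : B, R a b → a ≤ b)
    (hRer : ∀ a b c : B, a ≤ b → b ≤ c → R a c → R a b)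
    -- (ii) stable meets exist:
    (h_stm : ∀ p ∈ P, ∀ r ∈ P, r ≤ p → R r (proj Q r ⊓ p) →
      ∃ s ∈ P, R s p ∧ proj Q s = proj Q p ∧ proj Q r ⊓ s = r) :
    -- (1)
    (∀ p ∈ P, Frozen Q B0 B1 P R p → ∀ s ∈ P, R s p → proj Q s = proj Q p →
      (∀ b ∈ B0, proj B1 (s ⊓ b) = proj B1 (p ⊓ b)) ∧
      (∀ b ∈ B1, proj B0 (s ⊓ b) = proj B0 (p ⊓ b))) ∧
    -- (2)
    (∀ p ∈ P, Frozen Q B0 B1 P R p → ∀ q ∈ Q, q ≠ ⊥ → q ≤ proj Q p →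
      Frozen Q B0 B1 P R (q ⊓ p)) :=
  ⟨fun _ _ hp _ hs hRsp hsp => hp.proj_inf_eq hQ hQB0 hQB1 hs hRsp hsp,
    fun _ hpP hp _ hq _ _ => hp.inf_of_mem hQ hB0 hB1 hQB0 hQB1 hRle hRer h_stm hpP hq⟩

theorem Q_meet_frozen (Q B0 B1 P : Set B)
    (hQ : IsCompleteSubalgebra Q) (hB0 : IsCompleteSubalgebra B0)
    (hB1 : IsCompleteSubalgebra B1)
    (hQB0 : Q ⊆ B0) (hQB1 : Q ⊆ B1)
    (hPne : ∀ p ∈ P, p ≠ ⊥)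
    (R : B → B → Prop)
    (hRle : ∀ a b : B, R a b → a ≤ b)
    (hRer : ∀ a b c : B, a ≤ b → b ≤ c → R a c → R a b)
    -- (i) P is closed under meets with suitable elements of Q:
    (h_meet : ∀ p ∈ P, ∀ q ∈ Q, q ≠ ⊥ → q ≤ proj Q p → q ⊓ p ∈ P)
    -- (ii) stable meets exist:
    (h_stm : ∀ p ∈ P, ∀ r ∈ P, r ≤ p → R r (proj Q r ⊓ p) →
      ∃ s ∈ P, R s p ∧ proj Q s = proj Q p ∧ proj Q r ⊓ s = r) :
    -- (1)
    (∀ p ∈ P, Frozen Q B0 B1 P R p → ∀ s ∈ P, R s p → proj Q s = proj Q p →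
      (∀ b ∈ B0, proj B1 (s ⊓ b) = proj B1 (p ⊓ b)) ∧
      (∀ b ∈ B1, proj B0 (s ⊓ b) = proj B0 (p ⊓ b))) ∧
    -- (2)
    (∀ p ∈ P, Frozen Q B0 B1 P R p → ∀ q ∈ Q, q ≠ ⊥ → q ≤ proj Q p →
      Frozen Q B0 B1 P R (q ⊓ p)) :=
  Q_meet_frozen_general Q B0 B1 P hQ hB0 hB1 hQB0 hQB1 R hRle hRer h_stm

end Stmt16
end
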